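/- arXiv:2205.08273 — 7 statements merged into one kernel-verified Lean document; each statement's English description precedes it below -/
import Mathlib

section
/- Let ρ : ℕ → ℕ be a function such that ρ(n)/n is nonincreasing and tends to 0 as n → ∞. Then there exists a set B consisting of prime numbers such that: (i) B is Behrend, i.e. the set F_B of positive integers with no divisor in B has natural density 0; (ii) every B-admissible block appears in the B-free sequence, i.e. for every L ∈ ℕ and every B-admissible set A ⊆ {1,…,L} there exists n ∈ ℕ such that {j ∈ {1,…,L} : n + j ∈ F_B} = A; (iii) limsup_{n→∞} cpx_{1_{F_B}}(n)/2^{ρ(n)} ≥ 1. -/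
open Filter

/-- The number of distinct length-`n` blocks `(y(m+1), …, y(m+n))` occurring in the
sequence `y`, as `m` ranges over the nonnegative integers. -/
noncomputable def cpx (y : ℕ → Prop) (n : ℕ) : ℕ :=
  Nat.card {w : Fin n → Prop // ∃ m : ℕ, ∀ i : Fin n, w i = y (m + 1 + i)}

/-- `A ⊆ ℤ` is `B`-admissible if for every `b ∈ B` there is a residue class `r` mod `b`
such that no element of `A` is congruent to `r` mod `b`. -/
def IsAdmissible (B : Set ℕ) (A : Set ℤ) : Prop :=
  ∀ b ∈ B, ∃ r : ℤ, ∀ a ∈ A, ¬ ((b : ℤ) ∣ a - r)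

/-- `FreeSet B` is the set of `B`-free positive integers: positive integers with no
divisor in `B`. -/
def FreeSet (B : Set ℕ) : Set ℕ := {n : ℕ | 0 < n ∧ ∀ b ∈ B, ¬ b ∣ n}

/-!
The set `B` is a union of blocks of consecutive primes `(a_k, b_k]`, separated by huge gaps. Each
block has at least `k` primes and `∑ 1/p ≥ 1`, so `∏ (1 - 1/p) ≤ 1/2` over it; the first `t`
blocks thus sieve out all but a proportion `2^{-t}` of the integers, and `B` is Behrend.

An admissible pattern of length `L` is realised by the Chinese remainder theorem modulo all primes
up to `b_L`: each position outside the pattern is sent to its own prime of the `L`-th block, the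
other primes avoid the pattern thanks to admissibility, and the shift `n ≤ 2 * b_L#` (`#` the
primorial) is too small for any prime beyond the gap after `b_L` to divide `n + j`.

For the complexity, put `P = b_k#` and `m = a_{k+1}`. Every set `{t P : t ∈ S}` with
`S ⊆ [1, m]` is admissible (primes up to `b_k` miss the residue `1`, later primes exceed `m`), so
all `2^m` such patterns occur among the words of length `m P`; the gap is chosen so large that
`ρ (m P) < m`.
-/

open Finset

theorem exists_lt_primorial_forall_dvd_sub (b : ℕ) (c : ℕ → ℤ) :
    ∃ n < primorial b, ∀ q, q.Prime → q ≤ b → (q : ℤ) ∣ n - c q := by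
  have hne : ∀ q ∈ Nat.primesLE b, id q ≠ 0 := fun q hq => (Nat.mem_primesLE.1 hq).2.ne_zero
  have hcop : Set.Pairwise (Nat.primesLE b : Set ℕ) (Function.onFun Nat.Coprime id) :=
    fun p hp q hq hpq =>
      (Nat.coprime_primes (Nat.mem_primesLE.1 hp).2 (Nat.mem_primesLE.1 hq).2).2 hpq
  let n := Nat.chineseRemainderOfFinset (fun q => (c q : ZMod q).val) id _ hne hcop
  refine ⟨n, Nat.chineseRemainderOfFinset_lt_prod _ _ hne hcop, fun q hq hqb => ?_⟩
  have : NeZero q := ⟨hq.ne_zero⟩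
  have hn := n.2 q (Nat.mem_primesLE.2 ⟨hqb, hq⟩)
  rw [← ZMod.natCast_eq_natCast_iff, ZMod.natCast_zmod_val] at hn
  rw [← ZMod.intCast_eq_intCast_iff_dvd_sub]
  exact_mod_cast hn.symm

theorem exists_forall_not_dvd_sub_of_card_lt {q : ℕ} (A : Finset ℤ) (h : #A < q) :
    ∃ r : ℤ, ∀ a ∈ A, ¬ (q : ℤ) ∣ a - r := by
  have : NeZero q := ⟨by omega⟩
  obtain ⟨x, -, hx⟩ := exists_mem_notMem_of_card_lt_card
    (s := A.image ((↑) : ℤ → ZMod q)) (t := univ) (card_image_le.trans_lt (by simpa using h))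
  refine ⟨x.cast, fun a ha hdvd => hx (mem_image.2 ⟨a, ha, ?_⟩)⟩
  rwa [← ZMod.intCast_eq_intCast_iff_dvd_sub, ZMod.intCast_cast, ZMod.cast_id', id, eq_comm] at hdvd

def primesIoc (a b : ℕ) : Finset ℕ := {p ∈ Ioc a b | p.Prime}

theorem exists_le_sum_one_div_primesIoc (a : ℕ) (C : ℝ) :
    ∃ b, C ≤ ∑ p ∈ primesIoc a b, (1 : ℝ) / p := by
  set f := Set.indicator {p : ℕ | p.Prime} (fun n : ℕ => (1 : ℝ) / n)
  have hf : ∀ n, 0 ≤ f n := fun n => Set.indicator_nonneg (fun _ _ => by positivity) n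
  obtain ⟨n, hn⟩ : ∃ n, C + ∑ i ∈ range (a + 1), f i < ∑ i ∈ range n, f i := by
    by_contra! h
    exact not_summable_one_div_on_primes (summable_of_sum_range_le hf h)
  refine ⟨n + a, ?_⟩
  have hsplit := sum_range_add_sum_Ico f (show a + 1 ≤ n + a + 1 by omega)
  rw [Finset.Ico_add_one_add_one_eq_Ioc] at hsplit
  have hblock : ∑ i ∈ Ioc a (n + a), f i = ∑ p ∈ primesIoc a (n + a), (1 : ℝ) / p :=
    sum_indicator_eq_sum_filter _ _ _ id
  have hmono : ∑ i ∈ range n, f i ≤ ∑ i ∈ range (n + a + 1), f i :=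
    sum_le_sum_of_subset_of_nonneg (range_mono (by omega)) fun i _ _ => hf i
  linarith

theorem two_mul_prod_sub_one_le_prod {s : Finset ℕ} (hs : ∀ p ∈ s, 0 < p)
    (hsum : 1 ≤ ∑ p ∈ s, (1 : ℝ) / p) : 2 * ∏ p ∈ s, (p - 1) ≤ ∏ p ∈ s, p := by
  have hle : ∀ p ∈ s, (1 : ℝ) / p ≤ 1 := fun p hp =>
    div_le_one_of_le₀ (by exact_mod_cast hs p hp) (Nat.cast_nonneg p)
  have hprod : ∏ p ∈ s, (1 - (1 : ℝ) / p) ≤ 1 / 2 := calc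
    _ ≤ ∏ p ∈ s, Real.exp (-(1 / p)) := prod_le_prod (fun p hp => sub_nonneg.2 (hle p hp))
        fun p _ => by linarith [Real.add_one_le_exp (-(1 / (p : ℝ)))]
    _ = Real.exp (-∑ p ∈ s, (1 : ℝ) / p) := by rw [← Real.exp_sum, sum_neg_distrib]
    _ ≤ Real.exp (-1) := Real.exp_le_exp.2 (by linarith)
    _ ≤ 1 / 2 := Real.exp_neg_one_lt_half.le
  have hcast : ((∏ p ∈ s, (p - 1) : ℕ) : ℝ) = (∏ p ∈ s, (p : ℝ)) * ∏ p ∈ s, (1 - 1 / (p : ℝ)) := by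
    rw [← prod_mul_distrib, Nat.cast_prod]
    refine prod_congr rfl fun p hp => ?_
    have : (p : ℝ) ≠ 0 := by exact_mod_cast (hs p hp).ne'
    rw [Nat.cast_sub (hs p hp)]
    field_simp
    ring
  have hpos : (0 : ℝ) ≤ ∏ p ∈ s, (p : ℝ) := prod_nonneg fun p _ => Nat.cast_nonneg p
  have : (2 : ℝ) * ((∏ p ∈ s, (p - 1) : ℕ) : ℝ) ≤ ((∏ p ∈ s, p : ℕ) : ℝ) := by
    rw [hcast, Nat.cast_prod]
    nlinarith
  exact_mod_cast this

theorem exists_le_card_primesIoc_two_mul_prod_le (a k : ℕ) :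
    ∃ b, a ≤ b ∧ k ≤ #(primesIoc a b) ∧
      2 * ∏ p ∈ primesIoc a b, (p - 1) ≤ ∏ p ∈ primesIoc a b, p := by
  obtain ⟨b, hb⟩ := exists_le_sum_one_div_primesIoc a (k + 1)
  have hprime : ∀ p ∈ primesIoc a b, p.Prime := fun p hp => (mem_filter.1 hp).2
  have hcard : (k : ℝ) + 1 ≤ #(primesIoc a b) := by
    refine hb.trans ((sum_le_card_nsmul _ _ 1 fun p hp => ?_).trans_eq (by simp))
    exact div_le_one_of_le₀ (by exact_mod_cast (hprime p hp).one_le) (Nat.cast_nonneg p)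
  have hcard' : k + 1 ≤ #(primesIoc a b) := by exact_mod_cast hcard
  obtain ⟨p, hp⟩ := card_pos.1 (show 0 < #(primesIoc a b) by omega)
  have hab := mem_Ioc.1 (mem_filter.1 hp).1
  exact ⟨b, by omega, by omega, two_mul_prod_sub_one_le_prod (fun p hp => (hprime p hp).pos)
    (le_trans (by norm_cast; omega) hb)⟩

theorem totient_prod_primes {s : Finset ℕ} (hs : ∀ p ∈ s, p.Prime) :
    (∏ p ∈ s, p).totient = ∏ p ∈ s, (p - 1) := by
  have h := Nat.totient_mul_prod_primeFactors (∏ p ∈ s, p)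
  rw [Nat.primeFactors_prod hs] at h
  exact Nat.eq_of_mul_eq_mul_right (prod_pos fun p hp => (hs p hp).pos) (h.trans (mul_comm _ _))

theorem ncard_freeSet_inter_Icc_le {B : Set ℕ} {s : Finset ℕ} (hs : ∀ p ∈ s, p.Prime ∧ p ∈ B)
    (N : ℕ) : (FreeSet B ∩ Set.Icc 1 N).ncard ≤ (∏ p ∈ s, (p - 1)) * (N / ∏ p ∈ s, p + 1) := by
  classical
  rw [← totient_prod_primes fun p hp => (hs p hp).1]
  refine le_trans ?_ (Nat.Ico_filter_coprime_le 1 N (prod_pos fun p hp => (hs p hp).1.pos).ne')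
  rw [← Set.ncard_coe_finset]
  refine Set.ncard_le_ncard (fun x ⟨hfree, hx1, hxN⟩ => ?_) (finite_toSet _)
  simp only [coe_filter, mem_Ico, Set.mem_ofPred_eq]
  refine ⟨⟨hx1, by omega⟩, Nat.Coprime.prod_left fun p hp => ?_⟩
  exact ((hs p hp).1.coprime_iff_not_dvd).2 (hfree.2 p (hs p hp).2)

theorem tendsto_freeSet_density_zero {B : Set ℕ}
    (hB : ∀ t : ℕ, ∃ s : Finset ℕ, (∀ p ∈ s, p.Prime ∧ p ∈ B) ∧
      2 ^ t * ∏ p ∈ s, (p - 1) ≤ ∏ p ∈ s, p) :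
    Tendsto (fun N : ℕ => ((FreeSet B ∩ Set.Icc 1 N).ncard : ℝ) / N) atTop (nhds 0) := by
  refine tendsto_order.2 ⟨fun ε hε => Eventually.of_forall fun N => hε.trans_le (by positivity),
    fun ε hε => ?_⟩
  obtain ⟨t, ht⟩ := exists_pow_lt_of_lt_one (half_pos hε) (by norm_num : (1 / 2 : ℝ) < 1)
  obtain ⟨s, hs, hst⟩ := hB t
  set m := ∏ p ∈ s, p
  set φ := ∏ p ∈ s, (p - 1)
  have hm : (0 : ℝ) < m := by exact_mod_cast prod_pos fun p hp => (hs p hp).1.pos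
  have hφm : (φ : ℝ) / m < ε / 2 := by
    refine lt_of_le_of_lt ?_ ht
    rw [div_le_iff₀ hm, div_pow, one_pow, div_mul_eq_mul_div, one_mul, le_div_iff₀ (by positivity)]
    exact_mod_cast (mul_comm _ _).trans_le hst
  filter_upwards [(tendsto_const_div_atTop_nhds_zero_nat (φ : ℝ)).eventually
    (gt_mem_nhds (half_pos hε)), eventually_gt_atTop 0] with N hφN hN
  have hN' : (0 : ℝ) < N := by exact_mod_cast hN
  calc ((FreeSet B ∩ Set.Icc 1 N).ncard : ℝ) / N
      ≤ φ * ((N / m : ℕ) + 1) / N := by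
        gcongr; exact_mod_cast ncard_freeSet_inter_Icc_le hs N
    _ ≤ φ * (N / m + 1) / N := by gcongr; exact Nat.cast_div_le
    _ = φ / m + φ / N := by field_simp
    _ < ε := by linarith

theorem exists_shift_freeSet_iff {B : Set ℕ} (hB : B ⊆ {p | p.Prime}) {L b : ℕ}
    (hblock : ∃ s : Finset ℕ, ↑s ⊆ B ∧ (∀ p ∈ s, L < p ∧ p ≤ b) ∧ L ≤ #s)
    (hgap : ∀ q ∈ B, b < q → 2 * primorial b + L < q) {A : Set ℕ}
    (hadm : IsAdmissible B ((fun m : ℕ => (m : ℤ)) '' A)) :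
    ∃ n : ℕ, 1 ≤ n ∧ ∀ j ∈ Set.Icc 1 L, (n + j ∈ FreeSet B ↔ j ∈ A) := by
  classical
  obtain ⟨s, hsB, hs, hLs⟩ := hblock
  choose! r hr using hadm
  -- each position `j ∉ A` gets its own prime `e j ∈ s`, which will divide `n + j`
  let D : Finset ℕ := {j ∈ Icc 1 L | j ∉ A}
  obtain ⟨e⟩ : Nonempty (D ↪ s) := Function.Embedding.nonempty_of_card_le <| by
    simpa [D] using (card_filter_le _ _).trans (by simpa using hLs)
  let f : D → ℕ := fun d => e d
  have hf : Function.Injective f := Subtype.val_injective.comp e.injective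
  let c := Function.extend f (fun d => -(d : ℤ)) (fun q => -r q)
  have hcD : ∀ d, c (f d) = -(d : ℤ) := hf.extend_apply _ _
  have hcr : ∀ q, (¬∃ d, f d = q) → c q = -r q := fun q => Function.extend_apply' _ _ q
  obtain ⟨n₀, hn₀, hn₀c⟩ := exists_lt_primorial_forall_dvd_sub b c
  have hnc : ∀ q, q.Prime → q ≤ b → (q : ℤ) ∣ (n₀ + primorial b : ℕ) - c q := fun q hq hqb => by
    have := dvd_add (hn₀c q hq hqb) (Int.natCast_dvd_natCast.2 (hq.dvd_primorial_iff.2 hqb))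
    rwa [sub_add_eq_add_sub, ← Nat.cast_add] at this
  refine ⟨n₀ + primorial b, by have := primorial_pos b; omega,
    fun j ⟨hj1, hjL⟩ => ⟨fun hfree => ?_, fun hjA => ?_⟩⟩
  · by_contra hjA
    let d : D := ⟨j, by simp [D, hj1, hjL, hjA]⟩
    have hd : f d ∈ B := hsB (e d).2
    refine hfree.2 _ hd (Int.natCast_dvd_natCast.1 ?_)
    have := hnc _ (hB hd) (hs _ (e d).2).2
    rwa [hcD, sub_neg_eq_add, ← Nat.cast_add] at this
  refine ⟨by omega, fun q hq hqdvd => ?_⟩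
  have hqb : q ≤ b := by
    by_contra! hbq
    have := Nat.le_of_dvd (by omega) hqdvd
    have := hgap q hq hbq
    omega
  have hqj : (q : ℤ) ∣ j + c q := by
    have := dvd_sub (Int.natCast_dvd_natCast.2 hqdvd) (hnc q (hB hq) hqb)
    rwa [Nat.cast_add, Nat.cast_add, add_sub_sub_cancel] at this
  by_cases hqD : ∃ d, f d = q
  · obtain ⟨d, rfl⟩ := hqD
    rw [hcD, ← sub_eq_add_neg] at hqj
    have hdL : L < f d := (hs _ (e d).2).1
    obtain ⟨hd, hdA⟩ := mem_filter.1 d.2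
    have hd := mem_Icc.1 hd
    have : (j : ℤ) - d = 0 :=
      Int.eq_zero_of_abs_lt_dvd hqj (by rw [abs_lt]; constructor <;> omega)
    exact hdA (show (d : ℕ) = j by omega ▸ hjA)
  · rw [hcr q hqD, ← sub_eq_add_neg] at hqj
    exact hr q hq j ⟨j, hjA, rfl⟩ hqj

theorem isAdmissible_of_forall_dvd_or_card_lt {B : Set ℕ} (hB1 : 1 ∉ B) {P : ℕ} {A : Finset ℕ}
    (hA : ∀ a ∈ A, P ∣ a) (hBP : ∀ q ∈ B, q ∣ P ∨ #A < q) :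
    IsAdmissible B ((fun m : ℕ => (m : ℤ)) '' A) := by
  intro q hq
  rcases hBP q hq with hqP | hAq
  · refine ⟨1, ?_⟩
    rintro _ ⟨a, ha, rfl⟩ hdvd
    have hqa : (q : ℤ) ∣ a := Int.natCast_dvd_natCast.2 (hqP.trans (hA a ha))
    have : (q : ℤ) ∣ 1 := by simpa using dvd_sub hqa hdvd
    have hq1 : q = 1 := by exact_mod_cast Int.eq_one_of_dvd_one (by positivity) this
    exact hB1 (hq1 ▸ hq)
  · obtain ⟨r, hr⟩ := exists_forall_not_dvd_sub_of_card_lt (A.image ((↑) : ℕ → ℤ))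
      (card_image_le.trans_lt hAq)
    exact ⟨r, by rintro _ ⟨a, ha, rfl⟩; exact hr _ (mem_image_of_mem _ ha)⟩

theorem card_le_cpx {y : ℕ → Prop} {L : ℕ} (𝒜 : Finset (Finset ℕ))
    (h𝒜 : ∀ A ∈ 𝒜, A ⊆ Icc 1 L ∧ ∃ n, ∀ j ∈ Icc 1 L, (y (n + j) ↔ j ∈ A)) :
    #𝒜 ≤ cpx y L := by
  choose! hsub n hn using h𝒜
  let word : 𝒜 → {w : Fin L → Prop // ∃ m : ℕ, ∀ i : Fin L, w i = y (m + 1 + i)} :=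
    fun A => ⟨fun i => y (n A + 1 + i), n A, fun _ => rfl⟩
  have hword : Function.Injective word := by
    rintro ⟨A, hA⟩ ⟨A', hA'⟩ h
    have hy : ∀ j ∈ Icc 1 L, (j ∈ A ↔ j ∈ A') := fun j hj => by
      obtain ⟨hj1, hjL⟩ := mem_Icc.1 hj
      have := congrFun (congrArg Subtype.val h) ⟨j - 1, by omega⟩
      simp only [word, show n A + 1 + (j - 1) = n A + j by omega,
        show n A' + 1 + (j - 1) = n A' + j by omega, eq_iff_iff] at this
      rw [← hn A hA j hj, ← hn A' hA' j hj, this]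
    exact Subtype.ext (Finset.ext fun j => ⟨fun hj => (hy j (hsub A hA hj)).1 hj,
      fun hj => (hy j (hsub A' hA' hj)).2 hj⟩)
  calc #𝒜 = Nat.card 𝒜 := by simp
    _ ≤ cpx y L := Nat.card_le_card_of_injective word hword

theorem two_pow_le_cpx_freeSet {B : Set ℕ} (hB1 : 1 ∉ B) {P m : ℕ} (hP : 0 < P)
    (hBP : ∀ q ∈ B, q ∣ P ∨ m < q)
    (hreal : ∀ A : Set ℕ, A ⊆ Set.Icc 1 (m * P) → IsAdmissible B ((fun m : ℕ => (m : ℤ)) '' A) →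
      ∃ n : ℕ, ∀ j ∈ Set.Icc 1 (m * P), (n + j ∈ FreeSet B ↔ j ∈ A)) :
    2 ^ m ≤ cpx (· ∈ FreeSet B) (m * P) := by
  have hinj : Function.Injective (image (· * P)) :=
    image_injective fun _ _ h => Nat.eq_of_mul_eq_mul_right hP h
  calc 2 ^ m = #((Icc 1 m).powerset.image (image (· * P))) := by
        rw [card_image_of_injective _ hinj, card_powerset, Nat.card_Icc, Nat.add_sub_cancel]
    _ ≤ cpx (· ∈ FreeSet B) (m * P) := card_le_cpx _ fun A hA => by
        obtain ⟨S, hS, rfl⟩ := mem_image.1 hA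
        have hSm := mem_powerset.1 hS
        have hsub : S.image (· * P) ⊆ Icc 1 (m * P) := fun x hx => by
          obtain ⟨t, ht, rfl⟩ := mem_image.1 hx
          obtain ⟨ht1, htm⟩ := mem_Icc.1 (hSm ht)
          exact mem_Icc.2 ⟨Nat.one_le_iff_ne_zero.2 (by positivity), Nat.mul_le_mul_right P htm⟩
        have hadm := isAdmissible_of_forall_dvd_or_card_lt hB1 (A := S.image (· * P))
          (fun a ha => by obtain ⟨t, -, rfl⟩ := mem_image.1 ha; exact dvd_mul_left P t)
          fun q hq => (hBP q hq).imp_right fun hmq =>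
            (card_image_le.trans (card_le_card hSm)).trans_lt (by simpa using hmq)
        obtain ⟨n, hn⟩ := hreal _ (by rw [← coe_Icc]; exact coe_subset.2 hsub) hadm
        exact ⟨hsub, n, fun j hj => by simpa using hn j (by simpa using hj)⟩

theorem one_le_limsup_cpx_div_two_pow (y : ℕ → Prop) (ρ : ℕ → ℕ)
    (h : ∀ k, ∃ L ≥ k, 2 ^ ρ L ≤ cpx y L) :
    1 ≤ limsup (fun n : ℕ => (cpx y n : ENNReal) / 2 ^ ρ n) atTop := by
  refine le_limsup_of_frequently_le' (frequently_atTop.2 fun k => ?_)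
  obtain ⟨L, hkL, hL⟩ := h k
  refine ⟨L, hkL, ?_⟩
  rw [ENNReal.le_div_iff_mul_le (Or.inl (by positivity)) (Or.inl (by simp)), one_mul]
  exact_mod_cast hL

theorem eventually_mul_lt_of_tendsto_div_zero {ρ : ℕ → ℕ}
    (hlim : Tendsto (fun n : ℕ => (ρ n : ℝ) / n) atTop (nhds 0)) (P : ℕ) :
    ∀ᶠ n in atTop, ρ n * P < n := by
  filter_upwards [hlim.eventually (gt_mem_nhds (show (0 : ℝ) < 1 / (P + 1) by positivity)),
    eventually_gt_atTop 0] with n hn hn0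
  rw [div_lt_div_iff₀ (by exact_mod_cast hn0) (by positivity), one_mul] at hn
  have : ρ n * (P + 1) < n := by exact_mod_cast hn
  nlinarith

section PrimeBlocks

variable (N : ℕ → ℕ)

noncomputable def blockEndFrom (a k : ℕ) : ℕ :=
  (exists_le_card_primesIoc_two_mul_prod_le a k).choose

/-- With `b = blockEnd N k`: the gap up to the next block exceeds `2 * b# + k`, which bounds the
shifts realising patterns of length `k`, and `N (b#)`, the threshold that the length
`blockStart N (k + 1) * b#` of the words counted at stage `k` must pass. -/
noncomputable def blockStart : ℕ → ℕ
  | 0 => 0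
  | k + 1 =>
    let b := blockEndFrom (blockStart k) k
    2 * primorial b + b + k + N (primorial b) + 1

noncomputable def blockEnd (k : ℕ) : ℕ := blockEndFrom (blockStart N k) k

def primeBlocks : Set ℕ := {p | ∃ k, p ∈ primesIoc (blockStart N k) (blockEnd N k)}

theorem blockStart_succ (k : ℕ) : blockStart N (k + 1) =
    2 * primorial (blockEnd N k) + blockEnd N k + k + N (primorial (blockEnd N k)) + 1 := rfl

theorem blockStart_le_blockEnd (k : ℕ) : blockStart N k ≤ blockEnd N k :=
  (exists_le_card_primesIoc_two_mul_prod_le _ k).choose_spec.1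

theorem le_card_primesIoc_block (k : ℕ) : k ≤ #(primesIoc (blockStart N k) (blockEnd N k)) :=
  (exists_le_card_primesIoc_two_mul_prod_le _ k).choose_spec.2.1

theorem two_mul_prod_block_le (k : ℕ) :
    2 * ∏ p ∈ primesIoc (blockStart N k) (blockEnd N k), (p - 1) ≤
      ∏ p ∈ primesIoc (blockStart N k) (blockEnd N k), p :=
  (exists_le_card_primesIoc_two_mul_prod_le _ k).choose_spec.2.2

theorem blockEnd_lt_blockStart_succ (k : ℕ) : blockEnd N k < blockStart N (k + 1) := by
  rw [blockStart_succ]; omega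

theorem strictMono_blockStart : StrictMono (blockStart N) :=
  strictMono_nat_of_lt_succ fun k =>
    (blockStart_le_blockEnd N k).trans_lt (blockEnd_lt_blockStart_succ N k)

theorem blockEnd_lt_blockStart {k k' : ℕ} (h : k < k') : blockEnd N k < blockStart N k' :=
  (blockEnd_lt_blockStart_succ N k).trans_le ((strictMono_blockStart N).monotone h)

theorem primeBlocks_subset_primes : primeBlocks N ⊆ {p | p.Prime} :=
  fun _ ⟨_, hp⟩ => (mem_filter.1 hp).2

theorem blockStart_succ_lt_of_mem {q k : ℕ} (hq : q ∈ primeBlocks N) (h : blockEnd N k < q) :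
    blockStart N (k + 1) < q := by
  obtain ⟨k', hk'⟩ := hq
  obtain ⟨hq₁, hq₂⟩ := mem_Ioc.1 (mem_filter.1 hk').1
  rcases lt_or_ge k k' with hkk' | hk'k
  · exact ((strictMono_blockStart N).monotone hkk').trans_lt hq₁
  · rcases hk'k.lt_or_eq with hlt | rfl
    · have := blockEnd_lt_blockStart N hlt
      have := blockStart_le_blockEnd N k
      omega
    · omega

theorem exists_two_pow_mul_prod_le (t : ℕ) :
    ∃ s : Finset ℕ, (∀ p ∈ s, p.Prime ∧ p ∈ primeBlocks N) ∧
      2 ^ t * ∏ p ∈ s, (p - 1) ≤ ∏ p ∈ s, p := by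
  classical
  have hdisj : Set.PairwiseDisjoint ↑(range t)
      fun k => primesIoc (blockStart N k) (blockEnd N k) := by
    intro k _ k' _ hkk'
    refine disjoint_left.2 fun p hp hp' => ?_
    have h := (mem_Ioc.1 (mem_filter.1 hp).1)
    have h' := (mem_Ioc.1 (mem_filter.1 hp').1)
    rcases hkk'.lt_or_gt with hlt | hlt
    · have := blockEnd_lt_blockStart N hlt; omega
    · have := blockEnd_lt_blockStart N hlt; omega
  refine ⟨(range t).biUnion fun k => primesIoc (blockStart N k) (blockEnd N k),
    fun p hp => ?_, ?_⟩
  · obtain ⟨k, -, hk⟩ := mem_biUnion.1 hp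
    exact ⟨(mem_filter.1 hk).2, k, hk⟩
  · rw [prod_biUnion hdisj, prod_biUnion hdisj]
    calc 2 ^ t * ∏ k ∈ range t, ∏ p ∈ primesIoc (blockStart N k) (blockEnd N k), (p - 1)
        = ∏ k ∈ range t, 2 * ∏ p ∈ primesIoc (blockStart N k) (blockEnd N k), (p - 1) := by
          rw [prod_mul_distrib, prod_const, card_range]
      _ ≤ _ := prod_le_prod' fun k _ => two_mul_prod_block_le N k

theorem exists_shift_primeBlocks_iff (L : ℕ) {A : Set ℕ}
    (hadm : IsAdmissible (primeBlocks N) ((fun m : ℕ => (m : ℤ)) '' A)) :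
    ∃ n : ℕ, 1 ≤ n ∧ ∀ j ∈ Set.Icc 1 L, (n + j ∈ FreeSet (primeBlocks N) ↔ j ∈ A) := by
  refine exists_shift_freeSet_iff (b := blockEnd N L) (primeBlocks_subset_primes N)
    ⟨_, fun p hp => ⟨L, hp⟩, fun p hp => ?_, le_card_primesIoc_block N L⟩
    (fun q hq hbq => ?_) hadm
  · have hp' := mem_Ioc.1 (mem_filter.1 hp).1
    have : L ≤ blockStart N L := (strictMono_blockStart N).id_le L
    exact ⟨by omega, hp'.2⟩
  · have := blockStart_succ_lt_of_mem N hq hbq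
    rw [blockStart_succ] at this
    omega

theorem exists_two_pow_le_cpx_primeBlocks {ρ : ℕ → ℕ} (hN : ∀ P n, N P ≤ n → ρ n * P < n)
    (k : ℕ) : ∃ L ≥ k, 2 ^ ρ L ≤ cpx (· ∈ FreeSet (primeBlocks N)) L := by
  have hNm : N (primorial (blockEnd N k)) ≤ blockStart N (k + 1) := by
    rw [blockStart_succ]; omega
  set P := primorial (blockEnd N k)
  set m := blockStart N (k + 1)
  have hP : 0 < P := primorial_pos _
  have hkm : k < m := (strictMono_blockStart N).id_le (k + 1)
  have hρ : ρ (m * P) < m :=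
    Nat.lt_of_mul_lt_mul_right (hN P _ (hNm.trans (Nat.le_mul_of_pos_right m hP)))
  refine ⟨m * P, by nlinarith, (Nat.pow_le_pow_right two_pos hρ.le).trans ?_⟩
  refine two_pow_le_cpx_freeSet (fun h1 => Nat.not_prime_one (primeBlocks_subset_primes N h1)) hP
    (fun q hq => ?_) fun A _ hadm => (exists_shift_primeBlocks_iff N _ hadm).imp fun _ h => h.2
  by_cases hqb : q ≤ blockEnd N k
  · exact Or.inl ((primeBlocks_subset_primes N hq).dvd_primorial_iff.2 hqb)
  · exact Or.inr (blockStart_succ_lt_of_mem N hq (not_le.1 hqb))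

end PrimeBlocks

theorem behrend_set_with_admissible_blocks_and_large_complexity_general (ρ : ℕ → ℕ)
    (hlim : Tendsto (fun n : ℕ => (ρ n : ℝ) / n) atTop (nhds 0)) :
    ∃ B : Set ℕ, B ⊆ {p : ℕ | p.Prime} ∧
      Tendsto (fun N : ℕ => ((FreeSet B ∩ Set.Icc 1 N).ncard : ℝ) / N) atTop (nhds 0) ∧
      (∀ L : ℕ, ∀ A : Set ℕ, A ⊆ Set.Icc 1 L →
        IsAdmissible B ((fun m : ℕ => (m : ℤ)) '' A) →
        ∃ n : ℕ, 1 ≤ n ∧ ∀ j ∈ Set.Icc 1 L, (n + j ∈ FreeSet B ↔ j ∈ A)) ∧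
      1 ≤ Filter.limsup
        (fun n : ℕ => (cpx (fun m => m ∈ FreeSet B) n : ENNReal) / 2 ^ ρ n) atTop := by
  choose N hN using fun P => eventually_atTop.1 (eventually_mul_lt_of_tendsto_div_zero hlim P)
  exact ⟨primeBlocks N, primeBlocks_subset_primes N,
    tendsto_freeSet_density_zero (exists_two_pow_mul_prod_le N),
    fun L _ _ hadm => exists_shift_primeBlocks_iff N L hadm,
    one_le_limsup_cpx_div_two_pow _ ρ (exists_two_pow_le_cpx_primeBlocks N hN)⟩

/-- For every `ρ : ℕ → ℕ` with `ρ(n)/n` nonincreasing and tending to `0`, there is a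
Behrend set `B` of primes such that every `B`-admissible block appears in the `B`-free
sequence and `limsup cpx(n)/2^(ρ n) ≥ 1`. -/
theorem behrend_set_with_admissible_blocks_and_large_complexity (ρ : ℕ → ℕ)
    (hmono : ∀ m n : ℕ, 1 ≤ m → m ≤ n → (ρ n : ℝ) / n ≤ (ρ m : ℝ) / m)
    (hlim : Tendsto (fun n : ℕ => (ρ n : ℝ) / n) atTop (nhds 0)) :
    ∃ B : Set ℕ, B ⊆ {p : ℕ | p.Prime} ∧
      Tendsto (fun N : ℕ => ((FreeSet B ∩ Set.Icc 1 N).ncard : ℝ) / N) atTop (nhds 0) ∧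
      (∀ L : ℕ, ∀ A : Set ℕ, A ⊆ Set.Icc 1 L →
        IsAdmissible B ((fun m : ℕ => (m : ℤ)) '' A) →
        ∃ n : ℕ, 1 ≤ n ∧ ∀ j ∈ Set.Icc 1 L, (n + j ∈ FreeSet B ↔ j ∈ A)) ∧
      1 ≤ Filter.limsup
        (fun n : ℕ => (cpx (fun m => m ∈ FreeSet B) n : ENNReal) / 2 ^ ρ n) atTop :=
  behrend_set_with_admissible_blocks_and_large_complexity_general ρ hlim
end

section
/- Let B ⊆ ℕ \ {1} be a primitive set, and let X_B ⊆ {0,1}^ℤ be the set of all sequences whose support is B-admissible, equipped with the product topology, and let S denote the left shift. Then the dynamical system (X_B, S) is topologically transitive (i.e. for all nonempty open sets U, V ⊆ X_B there exists n ∈ ℤ with U ∩ SⁿV ≠ ∅) if and only if the elements of B are pairwise coprime. -/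
/-- The `B`-admissible subshift: all two-sided 0-1 sequences whose support is
`B`-admissible. -/
def XB (B : Set ℕ) : Set (ℤ → Bool) :=
  {x | IsAdmissible B {i : ℤ | x i = true}}

/-- The shift by `n`: `(shiftZ n x)(m) = x(m + n)`. -/
def shiftZ (n : ℤ) (x : ℤ → Bool) : ℤ → Bool := fun m => x (m + n)



lemma avoid_primes (f : ℕ → ℤ) :
    ∀ (S : Finset ℕ), (∀ q ∈ S, Nat.Prime q) → ∃ t : ℤ, ∀ q ∈ S, ¬ (q:ℤ) ∣ (t - f q) := by
  intro S
  induction S using Finset.induction_on with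
  | empty => exact fun _ => ⟨0, by simp⟩
  | @insert q₀ S hq₀S ih =>
    intro hS
    obtain ⟨t₀, ht₀⟩ := ih (fun q hq => hS q (Finset.mem_insert_of_mem hq))
    have hq₀ : Nat.Prime q₀ := hS q₀ (Finset.mem_insert_self _ _)
    have hq₀Z : Prime (q₀ : ℤ) := Int.prime_iff_natAbs_prime.mpr (by simpa using hq₀)
    set P : ℤ := ∏ q ∈ S, (q:ℤ) with hP
    have hq₀P : ¬ (q₀:ℤ) ∣ P := by
      intro h
      obtain ⟨q, hq, hdvd⟩ := (hq₀Z.dvd_finset_prod_iff _).1 h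
      have hqp : Nat.Prime q := hS q (Finset.mem_insert_of_mem hq)
      have h2 : q₀ ∣ q := Int.ofNat_dvd.mp (by exact_mod_cast hdvd)
      have h3 : q₀ = q := (Nat.prime_dvd_prime_iff_eq hq₀ hqp).mp h2
      exact hq₀S (h3 ▸ hq)
    have hpres : ∀ q ∈ S, ¬ (q:ℤ) ∣ (t₀ + P - f q) := by
      intro q hq hdvd
      have hqP : (q:ℤ) ∣ P := Finset.dvd_prod_of_mem _ hq
      have h2 : (q:ℤ) ∣ t₀ + P - f q - P := dvd_sub hdvd hqP
      have h3 : t₀ + P - f q - P = t₀ - f q := by ring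
      rw [h3] at h2
      exact ht₀ q hq h2
    by_cases h0 : (q₀:ℤ) ∣ (t₀ - f q₀)
    · refine ⟨t₀ + P, fun q hq => ?_⟩
      rcases Finset.mem_insert.mp hq with rfl | hq'
      · intro hdvd
        have : (q:ℤ) ∣ P := by
          have h2 := dvd_sub hdvd h0
          have h3 : t₀ + P - f q - (t₀ - f q) = P := by ring
          rwa [h3] at h2
        exact hq₀P this
      · exact hpres q hq'
    · refine ⟨t₀, fun q hq => ?_⟩
      rcases Finset.mem_insert.mp hq with rfl | hq'
      · exact h0
      · exact ht₀ q hq'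


lemma pow_fact_succ_dvd_mul {q m : ℕ} (hq : Nat.Prime q) (hm : m ≠ 0) {w : ℤ}
    (h : (q:ℤ) ^ (m.factorization q + 1) ∣ (m:ℤ) * w) : (q:ℤ) ∣ w := by
  set e := m.factorization q with he
  have hms : q ^ e * (m / q ^ e) = m := Nat.ordProj_mul_ordCompl_eq_self m q
  have hnd : ¬ (q:ℤ) ∣ ((m / q ^ e : ℕ) : ℤ) := by
    intro h2
    exact Nat.not_dvd_ordCompl hq hm (Int.ofNat_dvd.mp (by exact_mod_cast h2))
  have hcast : (m:ℤ) = (q:ℤ) ^ e * ((m / q ^ e : ℕ) : ℤ) := by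
    exact_mod_cast (congrArg (fun n : ℕ => (n : ℤ)) hms).symm
  rw [hcast, pow_succ] at h
  have h3 : (q:ℤ)^e * (q:ℤ) ∣ (q:ℤ)^e * (((m / q ^ e : ℕ) : ℤ) * w) := by
    rw [← mul_assoc]; exact h
  have h4 : (q:ℤ) ∣ ((m / q ^ e : ℕ) : ℤ) * w :=
    (mul_dvd_mul_iff_left (pow_ne_zero e (by exact_mod_cast hq.ne_zero : (q:ℤ) ≠ 0))).mp h3
  have hqZ : Prime (q:ℤ) := Int.prime_iff_natAbs_prime.mpr (by simpa using hq)
  rcases hqZ.dvd_mul.mp h4 with h5 | h5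
  · exact absurd h5 hnd
  · exact h5

lemma exists_avoiding (m : ℕ) (hm : m ≠ 0) (α : ℤ) (C : Finset ℕ)
    (hC : ∀ c ∈ C, ¬ c ∣ m) (hC0 : ∀ c ∈ C, c ≠ 0) :
    ∃ j : ℤ, (m:ℤ) ∣ (j - α) ∧ ∀ c ∈ C, ¬ (c:ℤ) ∣ j := by
  classical
  -- for each c choose a prime q with factorization gap
  have hex : ∀ c ∈ C, ∃ q : ℕ, Nat.Prime q ∧ m.factorization q < c.factorization q := by
    intro c hc
    have hne : ¬ c.factorization ≤ m.factorization := by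
      intro hle
      exact hC c hc ((Nat.factorization_le_iff_dvd (hC0 c hc) hm).mp hle)
    rw [Finsupp.le_def] at hne
    push_neg at hne
    obtain ⟨q, hq⟩ := hne
    refine ⟨q, ?_, hq⟩
    have : c.factorization q ≠ 0 := by omega
    exact Nat.prime_of_mem_primeFactors (by
      rw [← Nat.support_factorization]
      exact Finsupp.mem_support_iff.mpr this)
  choose qc hqcp hqclt using hex
  set S : Finset ℕ := C.attach.image (fun c => qc c.1 c.2) with hS
  have hSp : ∀ q ∈ S, Nat.Prime q := by
    intro q hq
    obtain ⟨c, _, rfl⟩ := Finset.mem_image.mp hq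
    exact hqcp _ _
  set E : ℕ → ℕ := fun q => m.factorization q + 1 with hE
  set f : ℕ → ℤ := fun q =>
    if h : ∃ t : ℤ, ((q:ℤ) ^ (E q)) ∣ (α + m * t) then h.choose else 0 with hf
  obtain ⟨t, ht⟩ := avoid_primes f S hSp
  refine ⟨α + m * t, by ring_nf; exact Dvd.intro t rfl, ?_⟩
  intro c hc hdvd
  -- q := qc c hc, q^(E q) divides c divides j
  set q := qc c hc with hq
  have hqS : q ∈ S := Finset.mem_image.mpr ⟨⟨c, hc⟩, Finset.mem_attach _ _, rfl⟩
  have hqprime : Nat.Prime q := hqcp c hc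
  have hpowc : q ^ (E q) ∣ c := by
    rw [hE]
    exact (Nat.Prime.pow_dvd_iff_le_factorization hqprime (hC0 c hc)).mpr (hqclt c hc)
  have hpowj : (q:ℤ) ^ (E q) ∣ (α + m * t) := by
    have : ((q:ℕ) ^ (E q) : ℤ) ∣ (c:ℤ) := by exact_mod_cast hpowc
    push_cast at this
    exact this.trans hdvd
  -- so f q was defined by choice, and its property gives a contradiction
  have hex2 : ∃ t' : ℤ, ((q:ℤ) ^ (E q)) ∣ (α + m * t') := ⟨t, hpowj⟩
  have hfq : ((q:ℤ) ^ (E q)) ∣ (α + m * f q) := by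
    rw [hf]; simp only [hex2, dif_pos]
    exact hex2.choose_spec
  have hdiff : ((q:ℤ) ^ (E q)) ∣ (m:ℤ) * (t - f q) := by
    have := dvd_sub hpowj hfq
    have h3 : α + m * t - (α + m * f q) = (m:ℤ) * (t - f q) := by ring
    rwa [h3] at this
  exact ht q hqS (pow_fact_succ_dvd_mul hqprime hm hdiff)


lemma exists_missed_class (F : Finset ℤ) (c : ℕ) (hc : F.card < c) :
    ∃ r : ℤ, (0 ≤ r ∧ r < c) ∧ ∀ i ∈ F, ¬ (c:ℤ) ∣ (i - r) := by
  classical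
  have hc0 : (0:ℤ) < (c:ℤ) := by exact_mod_cast Nat.zero_lt_of_lt hc
  set imgs : Finset ℤ := F.image (fun i => i % (c:ℤ)) with himgs
  set T : Finset ℤ := (Finset.range c).image (Nat.cast : ℕ → ℤ) with hT
  have hTcard : T.card = c := by
    rw [hT, Finset.card_image_of_injective _ Nat.cast_injective, Finset.card_range]
  have himgcard : imgs.card < T.card := by
    rw [hTcard]; exact lt_of_le_of_lt (Finset.card_image_le) hc
  have hns : ¬ T ⊆ imgs := fun hsub => absurd (Finset.card_le_card hsub) (by omega)
  obtain ⟨r, hrT, hrimgs⟩ := Finset.not_subset.mp hns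
  obtain ⟨k, hk, rfl⟩ := Finset.mem_image.mp hrT
  have hkc : (k:ℤ) < c := by exact_mod_cast Finset.mem_range.mp hk
  refine ⟨(k:ℤ), ⟨by positivity, hkc⟩, fun i hi hdvd => ?_⟩
  apply hrimgs
  have h1 : (k:ℤ) % (c:ℤ) = i % (c:ℤ) := Int.modEq_iff_dvd.mpr hdvd
  have h2 : (k:ℤ) % (c:ℤ) = (k:ℤ) := Int.emod_eq_of_lt (by positivity) hkc
  exact Finset.mem_image.mpr ⟨i, hi, by rw [← h1, h2]⟩

lemma crt_finset (t : ℕ → ℤ) :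
    ∀ (s : Finset ℕ), (∀ b ∈ s, 0 < b) →
      (∀ b ∈ s, ∀ b' ∈ s, b ≠ b' → Nat.Coprime b b') →
      ∃ n : ℤ, (∀ b ∈ s, (b:ℤ) ∣ (n - t b)) ∧ ∀ b ∈ s, (b:ℤ) ∣ (∏ b' ∈ s, (b':ℤ)) := by
  intro s
  induction s using Finset.induction_on with
  | empty => exact fun _ _ => ⟨0, by simp, by simp⟩
  | @insert b0 s hbs ih =>
    intro hpos hcop
    obtain ⟨n₀, hn₀, -⟩ := ih (fun b' hb' => hpos b' (Finset.mem_insert_of_mem hb'))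
      (fun x hx y hy hxy => hcop x (Finset.mem_insert_of_mem hx) y (Finset.mem_insert_of_mem hy) hxy)
    have hco : Nat.Coprime b0 (∏ b' ∈ s, b') := Nat.Coprime.prod_right (fun b' hb' =>
      hcop b0 (Finset.mem_insert_self _ _) b' (Finset.mem_insert_of_mem hb')
        (fun h => hbs (h ▸ hb')))
    set M : ℕ := ∏ b' ∈ s, b' with hM
    have hbez : (1:ℤ) = M * Nat.gcdA M b0 + b0 * Nat.gcdB M b0 := by
      have := Nat.gcd_eq_gcd_ab M b0
      rwa [Nat.Coprime.gcd_eq_one (Nat.Coprime.symm hco), Nat.cast_one] at this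
    refine ⟨n₀ + (M * Nat.gcdA M b0) * (t b0 - n₀), ?_, ?_⟩
    · intro b' hb'
      rcases Finset.mem_insert.mp hb' with heq | hb''
      · subst heq
        have heq2 : n₀ + (M * Nat.gcdA M b') * (t b' - n₀) - t b'
            = -((b':ℤ) * Nat.gcdB M b' * (t b' - n₀)) := by
          have h2 : (M : ℤ) * Nat.gcdA M b' = 1 - b' * Nat.gcdB M b' := by linarith [hbez]
          rw [h2]; ring
        rw [heq2]
        exact dvd_neg.mpr ⟨Nat.gcdB M b' * (t b' - n₀), by ring⟩
      · have h1 : (b':ℤ) ∣ n₀ - t b' := hn₀ b' hb''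
        have h2 : (b':ℤ) ∣ (M:ℤ) := by
          exact_mod_cast Int.natCast_dvd_natCast.mpr (Finset.dvd_prod_of_mem _ hb'')
        have h3 : (b':ℤ) ∣ (M * Nat.gcdA M b0) * (t b0 - n₀) :=
          Dvd.dvd.mul_right (h2.mul_right _) _
        have heq2 : n₀ + (M * Nat.gcdA M b0) * (t b0 - n₀) - t b'
            = (n₀ - t b') + (M * Nat.gcdA M b0) * (t b0 - n₀) := by ring
        rw [heq2]
        exact dvd_add h1 h3
    · intro b' hb'
      exact Finset.dvd_prod_of_mem _ hb'


lemma exists_cylinder {U : Set (ℤ → Bool)} (hU : IsOpen U) {x : ℤ → Bool} (hx : x ∈ U) :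
    ∃ W : Finset ℤ, ∀ z : ℤ → Bool, (∀ i ∈ W, z i = x i) → z ∈ U := by
  rw [isOpen_pi_iff] at hU
  obtain ⟨I, u, hu, hsub⟩ := hU x hx
  refine ⟨I, fun z hz => hsub (fun i hi => ?_)⟩
  have := (hu i hi).2
  rw [← hz i hi] at this
  exact this

lemma resid (m : ℕ) (hm : 0 < m) (p : ℕ) (hp0 : 0 < p) (hpm : p ∣ m) (e s : ℤ) (w : ℕ → ℤ)
    (hw : ∀ β : ℕ, β < m → ¬ (p:ℤ) ∣ ((β:ℤ) - e) → (m:ℤ) ∣ (w β - (β:ℤ)))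
    (havoid : ∀ β : ℕ, β < m → ¬ (p:ℤ) ∣ ((β:ℤ) - e) → ¬ (m:ℤ) ∣ (w β - s)) :
    (p:ℤ) ∣ (s - e) := by
  by_contra hps
  have hmZ : ((m:ℤ)) ≠ 0 := by positivity
  set β₀ : ℕ := (s % (m:ℤ)).toNat with hβ₀
  have hnn : 0 ≤ s % (m:ℤ) := Int.emod_nonneg s hmZ
  have hlt : s % (m:ℤ) < m := Int.emod_lt_of_pos s (by positivity)
  have hcast : (β₀:ℤ) = s % (m:ℤ) := Int.toNat_of_nonneg hnn
  have hβlt : β₀ < m := by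
    have : (β₀:ℤ) < (m:ℤ) := by rw [hcast]; exact hlt
    exact_mod_cast this
  have hmdvd : (m:ℤ) ∣ s - (β₀:ℤ) := by
    rw [hcast]
    exact Int.dvd_self_sub_of_emod_eq rfl
  have hpdvd : (p:ℤ) ∣ s - (β₀:ℤ) := dvd_trans (by exact_mod_cast hpm) hmdvd
  have hidx : ¬ (p:ℤ) ∣ ((β₀:ℤ) - e) := by
    intro h
    apply hps
    have : s - e = (s - β₀) + (β₀ - e) := by ring
    rw [this]
    exact dvd_add hpdvd h
  apply havoid β₀ hβlt hidx
  have h1 := hw β₀ hβlt hidx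
  have : w β₀ - s = (w β₀ - β₀) - (s - β₀) := by ring
  rw [this]
  exact dvd_sub h1 hmdvd

lemma shift_mem_XB {B : Set ℕ} {z : ℤ → Bool} (hz : z ∈ XB B) (n : ℤ) :
    shiftZ n z ∈ XB B := by
  intro b hb
  obtain ⟨r, hr⟩ := hz b hb
  refine ⟨r - n, fun i hi hdvd => ?_⟩
  have hzi : z (i + n) = true := hi
  apply hr (i + n) hzi
  have : i + n - r = i - (r - n) := by ring
  rw [this]
  exact hdvd


lemma backward_dir (B : Set ℕ) (hB2 : ∀ b ∈ B, 2 ≤ b)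
    (hcop : ∀ a ∈ B, ∀ b ∈ B, a ≠ b → Nat.Coprime a b)
    (U V : Set (ℤ → Bool)) (hU : IsOpen U) (hV : IsOpen V)
    (hUne : (U ∩ XB B).Nonempty) (hVne : (V ∩ XB B).Nonempty) :
    ∃ n : ℤ, ∃ x ∈ U ∩ XB B, shiftZ n x ∈ V ∩ XB B := by
  classical
  obtain ⟨x, hxU, hxB⟩ := hUne
  obtain ⟨y, hyV, hyB⟩ := hVne
  obtain ⟨W, hW⟩ := exists_cylinder hU hxU
  obtain ⟨W', hW'⟩ := exists_cylinder hV hyV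
  set Fx : Finset ℤ := W.filter (fun i => x i = true) with hFx
  set Fy : Finset ℤ := W'.filter (fun i => y i = true) with hFy
  set N : ℕ := Fx.card + Fy.card with hN
  -- residue choices
  set rx : ℕ → ℤ := fun b =>
    if h : ∃ r : ℤ, ∀ i ∈ {i : ℤ | x i = true}, ¬ ((b:ℤ) ∣ i - r) then h.choose else 0 with hrx
  set ry : ℕ → ℤ := fun b =>
    if h : ∃ r : ℤ, ∀ i ∈ {i : ℤ | y i = true}, ¬ ((b:ℤ) ∣ i - r) then h.choose else 0 with hry
  have hrxP : ∀ b ∈ B, ∀ i : ℤ, x i = true → ¬ ((b:ℤ) ∣ i - rx b) := by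
    intro b hb i hi
    have hex := hxB b hb
    rw [hrx]
    simp only [hex, dif_pos]
    exact hex.choose_spec i hi
  have hryP : ∀ b ∈ B, ∀ i : ℤ, y i = true → ¬ ((b:ℤ) ∣ i - ry b) := by
    intro b hb i hi
    have hex := hyB b hb
    rw [hry]
    simp only [hex, dif_pos]
    exact hex.choose_spec i hi
  -- small moduli
  have hfin : ({b | b ∈ B ∧ b ≤ N}).Finite :=
    Set.Finite.subset (Set.finite_Iic N) (fun b hb => hb.2)
  set B₀ : Finset ℕ := hfin.toFinset with hB₀
  have hB₀mem : ∀ b, b ∈ B₀ ↔ (b ∈ B ∧ b ≤ N) := by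
    intro b; rw [hB₀, Set.Finite.mem_toFinset]; rfl
  obtain ⟨n₀, hn₀, hdvdP⟩ := crt_finset (fun b => rx b - ry b) B₀
    (fun b hb => by have := hB2 b ((hB₀mem b).mp hb).1; omega)
    (fun b hb b' hb' hne => hcop b ((hB₀mem b).mp hb).1 b' ((hB₀mem b').mp hb').1 hne)
  set P : ℤ := ∏ b' ∈ B₀, (b':ℤ) with hP
  have hPpos : 0 < P := Finset.prod_pos (fun b hb => by
    have := hB2 b ((hB₀mem b).mp hb).1; positivity)
  -- bound for disjointness
  set bound : ℤ := (∑ i ∈ W, |i|) + (∑ i ∈ W', |i|) + 1 with hbound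
  have hboundW : ∀ i ∈ W, ∀ i' ∈ W', i - i' < bound := by
    intro i hi i' hi'
    have h1 : |i| ≤ ∑ j ∈ W, |j| := Finset.single_le_sum (fun j _ => abs_nonneg j) hi
    have h2 : |i'| ≤ ∑ j ∈ W', |j| := Finset.single_le_sum (fun j _ => abs_nonneg j) hi'
    have := abs_le.mp (le_refl |i|)
    have h3 : i ≤ |i| := le_abs_self i
    have h4 : -i' ≤ |i'| := neg_le_abs i'
    rw [hbound]
    linarith
  set c : ℤ := max (bound - n₀) 0 + 1 with hc
  set n : ℤ := n₀ + c * P with hn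
  have hmax0 : (0:ℤ) ≤ max (bound - n₀) 0 := le_max_right _ _
  have hmax1 : bound - n₀ ≤ max (bound - n₀) 0 := le_max_left _ _
  have hc1 : 1 ≤ c := by rw [hc]; omega
  have hP1 : 1 ≤ P := hPpos
  have hnbig : bound < n := by
    have h2 : c ≤ c * P := le_mul_of_one_le_right (by omega) hP1
    have h3 : bound - n₀ < c := by rw [hc]; omega
    have h4 : bound < n₀ + c := by omega
    have h5 : n₀ + c ≤ n₀ + c * P := by omega
    rw [hn]; omega
  have hnB₀ : ∀ b ∈ B₀, (b:ℤ) ∣ (n - (rx b - ry b)) := by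
    intro b hb
    have h1 := hn₀ b hb
    have h2 : (b:ℤ) ∣ c * P := (hdvdP b hb).mul_left c
    have : n - (rx b - ry b) = (n₀ - (rx b - ry b)) + c * P := by rw [hn]; ring
    rw [this]
    exact dvd_add h1 h2
  -- the glued point
  set z : ℤ → Bool := fun i => (decide (i ∈ Fx)) || (decide ((i - n) ∈ Fy)) with hz
  have hdisj : ∀ i ∈ W, (i - n) ∉ W' := by
    intro i hi h
    have := hboundW i hi (i - n) h
    omega
  have hdisj' : ∀ i ∈ W', (i + n) ∉ W := by
    intro i hi h
    have := hboundW (i + n) h i hi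
    omega
  have hzsupp : ∀ i : ℤ, z i = true → (i ∈ Fx ∨ i - n ∈ Fy) := by
    intro i hi
    rw [hz] at hi
    simp only [Bool.or_eq_true, decide_eq_true_eq] at hi
    exact hi
  have hzU : z ∈ U := by
    apply hW
    intro i hi
    rw [hz]
    simp only [Bool.or_eq_true, decide_eq_true_eq]
    by_cases hx1 : x i = true
    · simp only [hx1]
      have : i ∈ Fx := by rw [hFx]; exact Finset.mem_filter.mpr ⟨hi, hx1⟩
      simp [this]
    · have h1 : i ∉ Fx := by
        rw [hFx]; intro h; exact hx1 (Finset.mem_filter.mp h).2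
      have h2 : (i - n) ∉ Fy := by
        rw [hFy]; intro h
        exact hdisj i hi (Finset.mem_filter.mp h).1
      simp only [h1, h2, decide_eq_true_eq]
      simp only [Bool.not_eq_true] at hx1
      simp [hx1]
  have hzV : shiftZ n z ∈ V := by
    apply hW'
    intro i hi
    show z (i + n) = y i
    rw [hz]
    simp only
    by_cases hy1 : y i = true
    · have hmem : i ∈ Fy := by
        rw [hFy]; exact Finset.mem_filter.mpr ⟨hi, hy1⟩
      simp [hz, add_sub_cancel_right, hmem, hy1]
    · have h1 : (i + n) ∉ Fx := by
        rw [hFx]; intro h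
        exact hdisj' i hi (Finset.mem_filter.mp h).1
      have h2 : i ∉ Fy := by
        rw [hFy]; intro h
        exact hy1 (Finset.mem_filter.mp h).2
      simp only [Bool.not_eq_true] at hy1
      simp [hz, add_sub_cancel_right, h1, h2, hy1]
  have hzXB : z ∈ XB B := by
    intro b hb
    by_cases hbN : b ≤ N
    · refine ⟨rx b, fun i hi hdvd => ?_⟩
      have hb₀ : b ∈ B₀ := (hB₀mem b).mpr ⟨hb, hbN⟩
      rcases hzsupp i hi with h | h
      · rw [hFx] at h
        have hxi : x i = true := (Finset.mem_filter.mp h).2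
        exact hrxP b hb i hxi hdvd
      · rw [hFy] at h
        have hyi : y (i - n) = true := (Finset.mem_filter.mp h).2
        apply hryP b hb (i - n) hyi
        have h1 := hnB₀ b hb₀
        have : (i - n) - ry b = (i - rx b) - (n - (rx b - ry b)) := by ring
        rw [this]
        exact dvd_sub hdvd h1
    · -- pigeonhole
      set Fz : Finset ℤ := Fx ∪ Fy.image (fun j => j + n) with hFz
      have hcard : Fz.card < b := by
        have h1 : Fz.card ≤ Fx.card + (Fy.image (fun j => j + n)).card := Finset.card_union_le _ _
        have h2 : (Fy.image (fun j => j + n)).card ≤ Fy.card := Finset.card_image_le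
        omega
      obtain ⟨r, -, hr⟩ := exists_missed_class Fz b hcard
      refine ⟨r, fun i hi hdvd => ?_⟩
      have : i ∈ Fz := by
        rcases hzsupp i hi with h | h
        · exact Finset.mem_union_left _ h
        · refine Finset.mem_union_right _ (Finset.mem_image.mpr ⟨i - n, h, by ring⟩)
      exact hr i this hdvd
  exact ⟨n, z, ⟨hzU, hzXB⟩, ⟨hzV, shift_mem_XB hzXB n⟩⟩


lemma forward_aux (B : Set ℕ) (hB2 : ∀ b ∈ B, 2 ≤ b)
    (hprim : ∀ a ∈ B, ∀ b ∈ B, a ∣ b → a = b)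
    (a b : ℕ) (ha : a ∈ B) (hb : b ∈ B) (hlt : a < b) (hncop : ¬ Nat.Coprime a b)
    (H : ∀ U V : Set (ℤ → Bool), IsOpen U → IsOpen V →
        (U ∩ XB B).Nonempty → (V ∩ XB B).Nonempty →
        ∃ n : ℤ, ∃ x ∈ U ∩ XB B, shiftZ n x ∈ V ∩ XB B) : False := by
  classical
  have ha2 : 2 ≤ a := hB2 a ha
  have hb2 : 2 ≤ b := hB2 b hb
  have hab : a ≠ b := Nat.ne_of_lt hlt
  have ha0 : a ≠ 0 := by omega
  have hb0 : b ≠ 0 := by omega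
  -- the prime p
  set g : ℕ := Nat.gcd a b with hg
  have hg1 : g ≠ 1 := hncop
  set p : ℕ := g.minFac with hp
  have pp : Nat.Prime p := Nat.minFac_prime hg1
  have hp2 : 2 ≤ p := pp.two_le
  have hpa : p ∣ a := (Nat.minFac_dvd g).trans (Nat.gcd_dvd_left a b)
  have hpb : p ∣ b := (Nat.minFac_dvd g).trans (Nat.gcd_dvd_right a b)
  have hpZa : (p:ℤ) ∣ (a:ℤ) := Int.natCast_dvd_natCast.mpr hpa
  have hpZb : (p:ℤ) ∣ (b:ℤ) := Int.natCast_dvd_natCast.mpr hpb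
  -- the finite set C of intermediate elements of B
  have hfinC : ({c | c ∈ B ∧ c ≤ a + b ∧ c ≠ a ∧ c ≠ b}).Finite :=
    Set.Finite.subset (Set.finite_Iic (a + b)) (fun c hc => hc.2.1)
  set C : Finset ℕ := hfinC.toFinset with hC
  have hCmem : ∀ c, c ∈ C ↔ (c ∈ B ∧ c ≤ a + b ∧ c ≠ a ∧ c ≠ b) := by
    intro c; rw [hC, Set.Finite.mem_toFinset]; rfl
  have hCnda : ∀ c ∈ C, ¬ c ∣ a := by
    intro c hc hdvd
    exact ((hCmem c).mp hc).2.2.1 (hprim c ((hCmem c).mp hc).1 a ha hdvd)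
  have hCndb : ∀ c ∈ C, ¬ c ∣ b := by
    intro c hc hdvd
    exact ((hCmem c).mp hc).2.2.2 (hprim c ((hCmem c).mp hc).1 b hb hdvd)
  have hC0 : ∀ c ∈ C, c ≠ 0 := by
    intro c hc
    have := hB2 c ((hCmem c).mp hc).1; omega
  have hbnda : ¬ b ∣ a := fun h => hab (hprim b hb a ha h).symm
  have handb : ¬ a ∣ b := fun h => hab (hprim a ha b hb h)
  -- avoidance sets
  set Cb : Finset ℕ := insert b C with hCb
  set Ca : Finset ℕ := insert a C with hCa
  have hCbnd : ∀ c ∈ Cb, ¬ c ∣ a := by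
    intro c hc
    rcases Finset.mem_insert.mp hc with rfl | hc'
    · exact hbnda
    · exact hCnda c hc'
  have hCand : ∀ c ∈ Ca, ¬ c ∣ b := by
    intro c hc
    rcases Finset.mem_insert.mp hc with rfl | hc'
    · exact handb
    · exact hCndb c hc'
  have hCb0 : ∀ c ∈ Cb, c ≠ 0 := by
    intro c hc
    rcases Finset.mem_insert.mp hc with rfl | hc'
    · exact hb0
    · exact hC0 c hc'
  have hCa0 : ∀ c ∈ Ca, c ≠ 0 := by
    intro c hc
    rcases Finset.mem_insert.mp hc with rfl | hc'
    · exact ha0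
    · exact hC0 c hc'
  -- the elements
  have hjex : ∀ α : ℕ, ∃ j : ℤ, (a:ℤ) ∣ (j - (α:ℤ)) ∧ ∀ c ∈ Cb, ¬ (c:ℤ) ∣ j :=
    fun α => exists_avoiding a ha0 (α:ℤ) Cb hCbnd hCb0
  choose jfun hjmod hjav using hjex
  have hkex : ∀ β : ℕ, ∃ k : ℤ, (b:ℤ) ∣ (k - (β:ℤ)) ∧ ∀ c ∈ Ca, ¬ (c:ℤ) ∣ k :=
    fun β => exists_avoiding b hb0 (β:ℤ) Ca hCand hCa0
  choose kfun hkmod hkav using hkex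
  -- index sets
  set Ia : Finset ℕ := (Finset.range a).filter (fun α => ¬ (p:ℤ) ∣ (α:ℤ)) with hIa
  set Ib : Finset ℕ := (Finset.range b).filter (fun β => ¬ (p:ℤ) ∣ (β:ℤ)) with hIb
  set Ib' : Finset ℕ := (Finset.range b).filter (fun β => ¬ (p:ℤ) ∣ ((β:ℤ) - 1)) with hIb'
  set F : Finset ℤ := Ia.image jfun ∪ Ib.image kfun with hF
  set F' : Finset ℤ := Ia.image jfun ∪ Ib'.image kfun with hF'
  -- cardinalities
  have hIacard : Ia.card ≤ a := le_trans (Finset.card_filter_le _ _) (le_of_eq (Finset.card_range a))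
  have hIbcard : Ib.card ≤ b := le_trans (Finset.card_filter_le _ _) (le_of_eq (Finset.card_range b))
  have hIb'card : Ib'.card ≤ b := le_trans (Finset.card_filter_le _ _) (le_of_eq (Finset.card_range b))
  have hFcard : F.card ≤ a + b := by
    calc F.card ≤ (Ia.image jfun).card + (Ib.image kfun).card := Finset.card_union_le _ _
    _ ≤ a + b := by
        have h1 := le_trans (Finset.card_image_le (s := Ia) (f := jfun)) hIacard
        have h2 := le_trans (Finset.card_image_le (s := Ib) (f := kfun)) hIbcard
        omega
  have hF'card : F'.card ≤ a + b := by
    calc F'.card ≤ (Ia.image jfun).card + (Ib'.image kfun).card := Finset.card_union_le _ _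
    _ ≤ a + b := by
        have h1 := le_trans (Finset.card_image_le (s := Ia) (f := jfun)) hIacard
        have h2 := le_trans (Finset.card_image_le (s := Ib') (f := kfun)) hIb'card
        omega
  -- the open sets
  set U : Set (ℤ → Bool) := {x | ∀ i ∈ F, x i = true} with hU
  set V : Set (ℤ → Bool) := {x | ∀ i ∈ F', x i = true} with hV
  have hUopen : IsOpen U := by
    have : U = ⋂ i ∈ F, (fun x : ℤ → Bool => x i) ⁻¹' {true} := by
      ext x
      simp [hU, Set.mem_iInter]
    rw [this]
    exact isOpen_biInter_finset (fun i _ =>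
      (continuous_apply i).isOpen_preimage _ (isOpen_discrete _))
  have hVopen : IsOpen V := by
    have : V = ⋂ i ∈ F', (fun x : ℤ → Bool => x i) ⁻¹' {true} := by
      ext x
      simp [hV, Set.mem_iInter]
    rw [this]
    exact isOpen_biInter_finset (fun i _ =>
      (continuous_apply i).isOpen_preimage _ (isOpen_discrete _))
  -- basic facts about elements
  have hjnda : ∀ α ∈ Ia, ¬ (a:ℤ) ∣ jfun α := by
    intro α hα hdvd
    rw [hIa, Finset.mem_filter, Finset.mem_range] at hα
    have h1 : (a:ℤ) ∣ (α:ℤ) := by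
      have h2 := dvd_sub hdvd (hjmod α)
      have h3 : jfun α - (jfun α - (α:ℤ)) = (α:ℤ) := by ring
      rwa [h3] at h2
    have h4 : a ∣ α := Int.natCast_dvd_natCast.mp h1
    have h5 : α = 0 := Nat.eq_zero_of_dvd_of_lt h4 hα.1
    apply hα.2
    rw [h5]
    exact ⟨0, by simp⟩
  have hkndb : ∀ β ∈ Ib, ¬ (b:ℤ) ∣ kfun β := by
    intro β hβ hdvd
    rw [hIb, Finset.mem_filter, Finset.mem_range] at hβ
    have h1 : (b:ℤ) ∣ (β:ℤ) := by
      have h2 := dvd_sub hdvd (hkmod β)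
      have h3 : kfun β - (kfun β - (β:ℤ)) = (β:ℤ) := by ring
      rwa [h3] at h2
    have h4 : b ∣ β := Int.natCast_dvd_natCast.mp h1
    have h5 : β = 0 := Nat.eq_zero_of_dvd_of_lt h4 hβ.1
    apply hβ.2
    rw [h5]
    exact ⟨0, by simp⟩
  -- admissibility of F
  have hFadm : IsAdmissible B (↑F : Set ℤ) := by
    intro b' hb'
    by_cases h1 : b' = a
    · subst h1
      refine ⟨0, fun i hi hdvd => ?_⟩
      rw [sub_zero] at hdvd
      rcases Finset.mem_union.mp hi with h | h
      · obtain ⟨α, hα, rfl⟩ := Finset.mem_image.mp h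
        exact hjnda α hα hdvd
      · obtain ⟨β, hβ, rfl⟩ := Finset.mem_image.mp h
        exact hkav β b' (Finset.mem_insert_self _ _) hdvd
    · by_cases h2 : b' = b
      · subst h2
        refine ⟨0, fun i hi hdvd => ?_⟩
        rw [sub_zero] at hdvd
        rcases Finset.mem_union.mp hi with h | h
        · obtain ⟨α, hα, rfl⟩ := Finset.mem_image.mp h
          exact hjav α b' (Finset.mem_insert_self _ _) hdvd
        · obtain ⟨β, hβ, rfl⟩ := Finset.mem_image.mp h
          exact hkndb β hβ hdvd
      · by_cases h3 : b' ≤ a + b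
        · have hbC : b' ∈ C := (hCmem b').mpr ⟨hb', h3, h1, h2⟩
          refine ⟨0, fun i hi hdvd => ?_⟩
          rw [sub_zero] at hdvd
          rcases Finset.mem_union.mp hi with h | h
          · obtain ⟨α, hα, rfl⟩ := Finset.mem_image.mp h
            exact hjav α b' (Finset.mem_insert_of_mem hbC) hdvd
          · obtain ⟨β, hβ, rfl⟩ := Finset.mem_image.mp h
            exact hkav β b' (Finset.mem_insert_of_mem hbC) hdvd
        · obtain ⟨r, -, hr⟩ := exists_missed_class F b' (by omega)
          exact ⟨r, fun i hi => hr i hi⟩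
  -- admissibility of F' : need the special class mod b
  have hFadm' : IsAdmissible B (↑F' : Set ℤ) := by
    intro b' hb'
    by_cases h1 : b' = a
    · subst h1
      refine ⟨0, fun i hi hdvd => ?_⟩
      rw [sub_zero] at hdvd
      rcases Finset.mem_union.mp hi with h | h
      · obtain ⟨α, hα, rfl⟩ := Finset.mem_image.mp h
        exact hjnda α hα hdvd
      · obtain ⟨β, hβ, rfl⟩ := Finset.mem_image.mp h
        exact hkav β b' (Finset.mem_insert_self _ _) hdvd
    · by_cases h2 : b' = b
      · rw [h2]
        have hpbmul : p * (b / p) = b := Nat.mul_div_cancel' hpb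
        have hpamul : p * (a / p) = a := Nat.mul_div_cancel' hpa
        set T : Finset ℤ := (Finset.range (b / p)).image (fun i : ℕ => ((1 + p * i : ℕ) : ℤ)) with hT
        set Φ : Finset ℕ := Ia.filter (fun α => (p:ℤ) ∣ ((α:ℤ) - 1)) with hΦ
        set badJ : Finset ℤ := Φ.image (fun α => jfun α % (b:ℤ)) with hbadJ
        have hTcard : T.card = b / p := by
          rw [hT, Finset.card_image_of_injective, Finset.card_range]
          intro i j hij
          have hij2 : ((1 + p * i : ℕ) : ℤ) = ((1 + p * j : ℕ) : ℤ) := hij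
          have hij3 : 1 + p * i = 1 + p * j := by exact_mod_cast hij2
          have hpp : 0 < p := by omega
          exact Nat.eq_of_mul_eq_mul_left hpp (by omega)
        have hΦfacts : ∀ α ∈ Φ, α % p = 1 ∧ α < a := by
          intro α hα
          rw [hΦ, Finset.mem_filter] at hα
          have hαa : α < a := by
            have h5 := hα.1
            rw [hIa, Finset.mem_filter, Finset.mem_range] at h5
            exact h5.1
          refine ⟨?_, hαa⟩
          have h5 : (p:ℤ) ∣ ((α:ℤ) - 1) := hα.2
          have hα1 : 1 ≤ α := by
            by_contra h6
            have h7 : α = 0 := by omega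
            rw [h7] at h5
            have h8 : (p:ℤ) ∣ 1 := by
              have := (dvd_neg).mpr h5
              simpa using this
            have := Int.le_of_dvd one_pos h8
            have : p ≤ 1 := by exact_mod_cast this
            omega
          have h6 : (p:ℤ) ∣ (((α - 1 : ℕ)) : ℤ) := by
            have : (((α - 1 : ℕ)) : ℤ) = (α:ℤ) - 1 := by
              push_cast [Nat.cast_sub hα1]
              ring
            rw [this]; exact h5
          have h7 : p ∣ (α - 1) := Int.natCast_dvd_natCast.mp h6
          obtain ⟨m, hm⟩ := h7
          have h8 : α = p * m + 1 := by omega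
          rw [h8, Nat.mul_add_mod]
          exact Nat.mod_eq_of_lt (by omega)
        have hΦcard : Φ.card ≤ a / p := by
          have hmaps : ∀ α ∈ Φ, α / p ∈ Finset.range (a / p) := by
            intro α hα
            obtain ⟨hmod, hαa⟩ := hΦfacts α hα
            rw [Finset.mem_range]
            have hdm : p * (α / p) + α % p = α := Nat.div_add_mod α p
            have : p * (α / p) < p * (a / p) := by omega
            exact Nat.lt_of_mul_lt_mul_left this
          have hinj : Set.InjOn (fun α => α / p) ↑Φ := by
            intro α₁ h₁ α₂ h₂ heq
            obtain ⟨hm₁, -⟩ := hΦfacts α₁ (by exact_mod_cast h₁)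
            obtain ⟨hm₂, -⟩ := hΦfacts α₂ (by exact_mod_cast h₂)
            have hd₁ : p * (α₁ / p) + α₁ % p = α₁ := Nat.div_add_mod α₁ p
            have hd₂ : p * (α₂ / p) + α₂ % p = α₂ := Nat.div_add_mod α₂ p
            have heq' : α₁ / p = α₂ / p := heq
            rw [heq'] at hd₁
            omega
          have := Finset.card_le_card_of_injOn (fun α => α / p) hmaps hinj
          simpa using this
        have hbadcard : badJ.card < T.card := by
          have h5 : badJ.card ≤ Φ.card := Finset.card_image_le
          have h6 : a / p < b / p := Nat.div_lt_div_of_lt_of_dvd hpb hlt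
          omega
        have hns : ¬ T ⊆ badJ := fun hsub => absurd (Finset.card_le_card hsub) (by omega)
        obtain ⟨r, hrT, hrbad⟩ := Finset.not_subset.mp hns
        obtain ⟨i, hi, rfl⟩ := Finset.mem_image.mp hrT
        rw [Finset.mem_range] at hi
        have hrange : 0 ≤ ((1 + p * i : ℕ) : ℤ) ∧ ((1 + p * i : ℕ) : ℤ) < b := by
          constructor
          · positivity
          · have h5 : p * (i + 1) ≤ p * (b / p) := Nat.mul_le_mul_left p (by omega)
            have h6 : p * (i + 1) = p * i + p := by ring
            have h7 : 1 + p * i < b := by omega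
            exact_mod_cast h7
        have hr1 : (p:ℤ) ∣ (((1 + p * i : ℕ) : ℤ) - 1) := ⟨(i:ℤ), by push_cast; ring⟩
        refine ⟨((1 + p * i : ℕ) : ℤ), fun z hz hdvd => ?_⟩
        rcases Finset.mem_union.mp hz with h | h
        · obtain ⟨α, hα, rfl⟩ := Finset.mem_image.mp h
          -- show α ∈ Φ and derive contradiction with hrbad
          have hp1 : (p:ℤ) ∣ (jfun α - ((1 + p * i : ℕ) : ℤ)) := dvd_trans hpZb hdvd
          have hp2' : (p:ℤ) ∣ (jfun α - 1) := by
            have h5 : jfun α - 1 = (jfun α - ((1 + p * i : ℕ) : ℤ)) + (((1 + p * i : ℕ) : ℤ) - 1) := by ring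
            rw [h5]; exact dvd_add hp1 hr1
          have hp3 : (p:ℤ) ∣ (jfun α - (α:ℤ)) := dvd_trans hpZa (hjmod α)
          have hp4 : (p:ℤ) ∣ ((α:ℤ) - 1) := by
            have h5 : (α:ℤ) - 1 = (jfun α - 1) - (jfun α - (α:ℤ)) := by ring
            rw [h5]; exact dvd_sub hp2' hp3
          have hαΦ : α ∈ Φ := by
            rw [hΦ, Finset.mem_filter]; exact ⟨hα, hp4⟩
          apply hrbad
          rw [hbadJ]
          apply Finset.mem_image.mpr
          refine ⟨α, hαΦ, ?_⟩
          have h5 : ((1 + p * i : ℕ) : ℤ) ≡ jfun α [ZMOD (b:ℤ)] := Int.modEq_iff_dvd.mpr hdvd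
          have h6 : ((1 + p * i : ℕ) : ℤ) % b = jfun α % b := h5
          rw [← h6]
          exact Int.emod_eq_of_lt hrange.1 hrange.2
        · obtain ⟨β, hβ, rfl⟩ := Finset.mem_image.mp h
          rw [hIb', Finset.mem_filter] at hβ
          apply hβ.2
          have h5 : (b:ℤ) ∣ ((β:ℤ) - ((1 + p * i : ℕ) : ℤ)) := by
            have h6 : (β:ℤ) - ((1 + p * i : ℕ) : ℤ)
                = (kfun β - ((1 + p * i : ℕ) : ℤ)) - (kfun β - (β:ℤ)) := by ring
            rw [h6]; exact dvd_sub hdvd (hkmod β)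
          have h7 : (p:ℤ) ∣ ((β:ℤ) - ((1 + p * i : ℕ) : ℤ)) := dvd_trans hpZb h5
          have h8 : (β:ℤ) - 1 = ((β:ℤ) - ((1 + p * i : ℕ) : ℤ)) + (((1 + p * i : ℕ) : ℤ) - 1) := by ring
          rw [h8]
          exact dvd_add h7 hr1
      · by_cases h3 : b' ≤ a + b
        · have hbC : b' ∈ C := (hCmem b').mpr ⟨hb', h3, h1, h2⟩
          refine ⟨0, fun i hi hdvd => ?_⟩
          rw [sub_zero] at hdvd
          rcases Finset.mem_union.mp hi with h | h
          · obtain ⟨α, hα, rfl⟩ := Finset.mem_image.mp h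
            exact hjav α b' (Finset.mem_insert_of_mem hbC) hdvd
          · obtain ⟨β, hβ, rfl⟩ := Finset.mem_image.mp h
            exact hkav β b' (Finset.mem_insert_of_mem hbC) hdvd
        · obtain ⟨r, -, hr⟩ := exists_missed_class F' b' (by omega)
          exact ⟨r, fun i hi => hr i hi⟩
  -- the base points
  set xU : ℤ → Bool := fun i => decide (i ∈ F) with hxU
  set xV : ℤ → Bool := fun i => decide (i ∈ F') with hxV
  have hxUsupp : {i : ℤ | xU i = true} = (↑F : Set ℤ) := by
    ext i; simp [hxU]
  have hxVsupp : {i : ℤ | xV i = true} = (↑F' : Set ℤ) := by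
    ext i; simp [hxV]
  have hxUmem : xU ∈ U ∩ XB B := by
    constructor
    · intro i hi
      simp [hxU, hi]
    · show IsAdmissible B {i : ℤ | xU i = true}
      rw [hxUsupp]; exact hFadm
  have hxVmem : xV ∈ V ∩ XB B := by
    constructor
    · intro i hi
      simp [hxV, hi]
    · show IsAdmissible B {i : ℤ | xV i = true}
      rw [hxVsupp]; exact hFadm'
  -- apply transitivity
  obtain ⟨n, x, hx1, hx2⟩ := H U V hUopen hVopen ⟨xU, hxUmem⟩ ⟨xV, hxVmem⟩
  have hxF : ∀ i ∈ F, x i = true := hx1.1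
  have hxF' : ∀ i ∈ F', x (i + n) = true := fun i hi => hx2.1 i hi
  obtain ⟨r, hr⟩ := hx1.2 a ha
  obtain ⟨r', hr'⟩ := hx1.2 b hb
  have hjF : ∀ β : ℕ, β ∈ Ia → jfun β ∈ F := fun β hβ =>
    Finset.mem_union_left _ (Finset.mem_image.mpr ⟨β, hβ, rfl⟩)
  have hjF' : ∀ β : ℕ, β ∈ Ia → jfun β ∈ F' := fun β hβ =>
    Finset.mem_union_left _ (Finset.mem_image.mpr ⟨β, hβ, rfl⟩)
  have hkF : ∀ β : ℕ, β ∈ Ib → kfun β ∈ F := fun β hβ =>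
    Finset.mem_union_right _ (Finset.mem_image.mpr ⟨β, hβ, rfl⟩)
  have hkF' : ∀ β : ℕ, β ∈ Ib' → kfun β ∈ F' := fun β hβ =>
    Finset.mem_union_right _ (Finset.mem_image.mpr ⟨β, hβ, rfl⟩)
  have hIamem : ∀ β : ℕ, β < a → ¬ (p:ℤ) ∣ ((β:ℤ) - 0) → β ∈ Ia := by
    intro β hβ hc
    rw [sub_zero] at hc
    rw [hIa, Finset.mem_filter, Finset.mem_range]
    exact ⟨hβ, hc⟩
  have hIbmem : ∀ β : ℕ, β < b → ¬ (p:ℤ) ∣ ((β:ℤ) - 0) → β ∈ Ib := by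
    intro β hβ hc
    rw [sub_zero] at hc
    rw [hIb, Finset.mem_filter, Finset.mem_range]
    exact ⟨hβ, hc⟩
  have hIb'mem : ∀ β : ℕ, β < b → ¬ (p:ℤ) ∣ ((β:ℤ) - 1) → β ∈ Ib' := by
    intro β hβ hc
    rw [hIb', Finset.mem_filter, Finset.mem_range]
    exact ⟨hβ, hc⟩
  have hap : 0 < a := by omega
  have hbp : 0 < b := by omega
  have hpp : 0 < p := by omega
  have c1 : (p:ℤ) ∣ (r - 0) := by
    apply resid a hap p hpp hpa 0 r jfun (fun β _ _ => hjmod β)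
    intro β hβ hc hdvd
    exact hr (jfun β) (hxF _ (hjF β (hIamem β hβ hc))) hdvd
  have c2 : (p:ℤ) ∣ ((r - n) - 0) := by
    apply resid a hap p hpp hpa 0 (r - n) jfun (fun β _ _ => hjmod β)
    intro β hβ hc hdvd
    apply hr (jfun β + n) (hxF' _ (hjF' β (hIamem β hβ hc)))
    have h5 : jfun β + n - r = jfun β - (r - n) := by ring
    rw [h5]
    exact hdvd
  have c3 : (p:ℤ) ∣ (r' - 0) := by
    apply resid b hbp p hpp hpb 0 r' kfun (fun β _ _ => hkmod β)
    intro β hβ hc hdvd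
    exact hr' (kfun β) (hxF _ (hkF β (hIbmem β hβ hc))) hdvd
  have c4 : (p:ℤ) ∣ ((r' - n) - 1) := by
    apply resid b hbp p hpp hpb 1 (r' - n) kfun (fun β _ _ => hkmod β)
    intro β hβ hc hdvd
    apply hr' (kfun β + n) (hxF' _ (hkF' β (hIb'mem β hβ hc)))
    have h5 : kfun β + n - r' = kfun β - (r' - n) := by ring
    rw [h5]
    exact hdvd
  rw [sub_zero] at c1 c2 c3
  have hn : (p:ℤ) ∣ n := by
    have h5 : n = r - (r - n) := by ring
    rw [h5]; exact dvd_sub c1 c2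
  have hn1 : (p:ℤ) ∣ (1:ℤ) := by
    have h5 : (1:ℤ) = (r' - n) - ((r' - n) - 1) - n + n := by ring
    have h6 : (p:ℤ) ∣ (r' - n) := by
      have h7 : r' - n = r' - n := rfl
      have h8 : (p:ℤ) ∣ ((r' - n) - 1) + 1 - 1 := by
        simpa using c4
      -- direct: r' - n = r' - n ; use c3 and hn
      have : r' - n = r' - n := rfl
      exact (by
        have h9 : r' - n = r' - n := rfl
        have : (p:ℤ) ∣ r' - n := by
          have := dvd_sub c3 hn
          simpa using this
        exact this)
    have h10 := dvd_sub h6 c4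
    have h11 : (r' - n) - ((r' - n) - 1) = 1 := by ring
    rwa [h11] at h10
  have : (p:ℤ) ≤ 1 := Int.le_of_dvd one_pos hn1
  have : p ≤ 1 := by exact_mod_cast this
  omega


/-- For a primitive set `B ⊆ ℕ \ {1}`, the `B`-admissible subshift `(X_B, S)` (with the
product topology on `{0,1}^ℤ`) is topologically transitive if and only if the elements of
`B` are pairwise coprime. -/
theorem admissible_subshift_transitive_iff_coprime (B : Set ℕ)
    (hB2 : ∀ b ∈ B, 2 ≤ b)
    (hprim : ∀ a ∈ B, ∀ b ∈ B, a ∣ b → a = b) :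
    (∀ U V : Set (ℤ → Bool), IsOpen U → IsOpen V →
        (U ∩ XB B).Nonempty → (V ∩ XB B).Nonempty →
        ∃ n : ℤ, ∃ x ∈ U ∩ XB B, shiftZ n x ∈ V ∩ XB B) ↔
      (∀ a ∈ B, ∀ b ∈ B, a ≠ b → Nat.Coprime a b) := by
  classical
  constructor
  · intro H a ha b hb hne
    by_contra hncop
    rcases lt_or_gt_of_ne hne with h | h
    · exact forward_aux B hB2 hprim a b ha hb h hncop H
    · exact forward_aux B hB2 hprim b a hb ha h (fun hc => hncop (Nat.Coprime.symm hc)) H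
  · intro hcop U V hU hV hUne hVne
    exact backward_dir B hB2 hcop U V hU hV hUne hVne
end

section
/- Let B ⊆ ℕ \ {1} be a set whose elements are pairwise coprime. Then for any finite B-admissible sets A₁, A₂ ⊆ ℤ there exists n ∈ ℤ such that (A₁ + n) ∪ A₂ is B-admissible. -/
theorem Int.exists_forall_dvd_sub_of_pairwise_coprime {ι : Type*} [Finite ι] {m : ι → ℕ}
    (hm : Pairwise fun i j => Nat.Coprime (m i) (m j)) (c : ι → ℤ) :
    ∃ n : ℤ, ∀ i, (m i : ℤ) ∣ n - c i := by
  let I : ι → Ideal ℤ := fun i => Ideal.span {(m i : ℤ)}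
  have hI : Pairwise fun i j => IsCoprime (I i) (I j) := fun i j hij =>
    (Ideal.isCoprime_span_singleton_iff _ _).2 (Nat.isCoprime_iff_coprime.2 (hm hij))
  obtain ⟨n, hn⟩ := Ideal.exists_forall_sub_mem_ideal hI c
  exact ⟨n, fun i => Ideal.mem_span_singleton.1 (hn i)⟩

theorem Int.exists_forall_not_dvd_sub_of_ncard_lt {A : Set ℤ} (hA : A.Finite) {b : ℕ}
    (hb : A.ncard < b) : ∃ r : ℤ, ∀ a ∈ A, ¬ (b : ℤ) ∣ a - r := by
  have : NeZero b := ⟨by omega⟩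
  have hcard : ((Int.cast : ℤ → ZMod b) '' A).ncard < Nat.card (ZMod b) := by
    rw [Nat.card_zmod]
    exact (Set.ncard_image_le hA).trans_lt hb
  obtain ⟨x, hx⟩ : ∃ x : ZMod b, x ∉ (Int.cast : ℤ → ZMod b) '' A := by
    by_contra! h
    rw [Set.eq_univ_of_forall h, Set.ncard_univ] at hcard
    exact hcard.false
  refine ⟨ZMod.cast x, fun a ha hdvd => hx ⟨a, ha, ?_⟩⟩
  rw [← ZMod.intCast_zmod_cast x, ZMod.intCast_eq_intCast_iff_dvd_sub]
  exact dvd_sub_comm.1 hdvd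

theorem not_dvd_sub_image_add_union {R : Type*} [CommRing R] {A₁ A₂ : Set R} {b r₁ r₂ n : R}
    (hr₁ : ∀ a ∈ A₁, ¬ b ∣ a - r₁) (hr₂ : ∀ a ∈ A₂, ¬ b ∣ a - r₂) (hn : b ∣ n - (r₂ - r₁)) :
    ∀ a ∈ (fun a => a + n) '' A₁ ∪ A₂, ¬ b ∣ a - r₂ := by
  rintro x (⟨a, ha, rfl⟩ | hx) hdvd
  · refine hr₁ a ha ?_
    have := dvd_sub hdvd hn
    rwa [show a + n - r₂ - (n - (r₂ - r₁)) = a - r₁ by ring] at this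
  · exact hr₂ x hx hdvd

theorem Set.ncard_image_union_le {α β : Type*} {s : Set α} (hs : s.Finite) (f : α → β)
    (t : Set β) : (f '' s ∪ t).ncard ≤ s.ncard + t.ncard :=
  (ncard_union_le _ _).trans (Nat.add_le_add_right (ncard_image_le hs) _)

theorem coprime_implies_joint_admissibility_general (B : Set ℕ)
    (hcop : ∀ a ∈ B, ∀ b ∈ B, a ≠ b → Nat.Coprime a b)
    (A₁ A₂ : Set ℤ) (h₁ : A₁.Finite) (h₂ : A₂.Finite)
    (ha₁ : IsAdmissible B A₁) (ha₂ : IsAdmissible B A₂) :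
    ∃ n : ℤ, IsAdmissible B (((fun a => a + n) '' A₁) ∪ A₂) := by
  choose r₁ hr₁ using ha₁
  choose r₂ hr₂ using ha₂
  set N := A₁.ncard + A₂.ncard
  let S : Set ℕ := {b ∈ B | b ≤ N}
  have : Finite S := ((Set.finite_Iic N).subset fun _ hb => hb.2).to_subtype
  obtain ⟨n, hn⟩ := Int.exists_forall_dvd_sub_of_pairwise_coprime (m := ((↑) : S → ℕ))
    (fun b b' hbb' => hcop b b.2.1 b' b'.2.1 (Subtype.val_injective.ne hbb'))
    (fun b => r₂ b b.2.1 - r₁ b b.2.1)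
  refine ⟨n, fun b hb => ?_⟩
  rcases le_or_gt b N with hbN | hbN
  · exact ⟨r₂ b hb, not_dvd_sub_image_add_union (hr₁ b hb) (hr₂ b hb) (hn ⟨b, hb, hbN⟩)⟩
  · exact Int.exists_forall_not_dvd_sub_of_ncard_lt ((h₁.image _).union h₂)
      ((Set.ncard_image_union_le h₁ _ A₂).trans_lt hbN)

/-- If the elements of `B ⊆ ℕ \ {1}` are pairwise coprime, then for any finite
`B`-admissible sets `A₁, A₂ ⊆ ℤ` there is `n ∈ ℤ` such that `(A₁ + n) ∪ A₂` is
`B`-admissible. -/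
theorem coprime_implies_joint_admissibility (B : Set ℕ)
    (hB2 : ∀ b ∈ B, 2 ≤ b)
    (hcop : ∀ a ∈ B, ∀ b ∈ B, a ≠ b → Nat.Coprime a b)
    (A₁ A₂ : Set ℤ) (h₁ : A₁.Finite) (h₂ : A₂.Finite)
    (ha₁ : IsAdmissible B A₁) (ha₂ : IsAdmissible B A₂) :
    ∃ n : ℤ, IsAdmissible B (((fun a => a + n) '' A₁) ∪ A₂) :=
  coprime_implies_joint_admissibility_general B hcop A₁ A₂ h₁ h₂ ha₁ ha₂
end

section
/- For any set B ⊆ ℕ \ {1}, the space X_B ⊆ {0,1}^ℤ of all sequences whose support is B-admissible, equipped with the topology induced from the product topology on {0,1}^ℤ, has no isolated points. In particular, for every finite B-admissible set A ⊆ ℤ and every L ∈ ℕ there exists m > L such that A ∪ {m} is B-admissible. -/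
lemma isAdmissible_mono {B : Set ℕ} {A A' : Set ℤ} (h : A' ⊆ A) (hA : IsAdmissible B A) :
    IsAdmissible B A' := fun b hb => (hA b hb).imp fun _ hr a ha => hr a (h ha)

lemma extend_lemma (B : Set ℕ) (hB2 : ∀ b ∈ B, 2 ≤ b) :
    ∀ A : Set ℤ, A.Finite → IsAdmissible B A → ∀ L : ℕ,
      ∃ m : ℤ, (L : ℤ) < m ∧ IsAdmissible B (A ∪ {m}) := by
  classical
  intro A hA hAdm L
  rcases A.eq_empty_or_nonempty with rfl | ⟨a₀, ha₀⟩
  · refine ⟨L + 1, by omega, ?_⟩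
    intro b hb
    refine ⟨(L : ℤ) + 2, ?_⟩
    intro a ha hd
    rcases ha with ha | ha
    · exact absurd ha (Set.notMem_empty a)
    · rw [Set.mem_singleton_iff] at ha
      subst ha
      have h1 : ((L : ℤ) + 1) - ((L : ℤ) + 2) = -1 := by ring
      rw [h1] at hd
      have h2 : (b : ℤ) ∣ 1 := (dvd_neg).mp hd
      have h3 : (b : ℤ) = 1 := Int.eq_one_of_dvd_one (by positivity) h2
      have hb2 := hB2 b hb
      have : b = 1 := by exact_mod_cast h3
      omega
  · set F := hA.toFinset with hF
    set n := F.card with hn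
    set P : ℕ := ∏ b ∈ (Finset.range (n + 2)).filter (fun b => b ∈ B), b with hP
    have hP1 : 1 ≤ P := by
      rw [hP]
      apply Finset.one_le_prod'
      intro b hb
      simp only [Finset.mem_filter] at hb
      have := hB2 b hb.2
      omega
    set k : ℕ := a₀.natAbs + L + 1 with hk
    set m : ℤ := a₀ + (k : ℤ) * (P : ℤ) with hm
    have hPZ : (1 : ℤ) ≤ (P : ℤ) := by exact_mod_cast hP1
    have hmL : (L : ℤ) < m := by
      have h1 : (k : ℤ) * (P : ℤ) ≥ (k : ℤ) :=
        le_mul_of_one_le_right (by positivity) hPZ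
      have h2 : -|a₀| ≤ a₀ := neg_abs_le a₀
      rw [hm]
      push_cast [hk] at h1 ⊢
      omega
    refine ⟨m, hmL, ?_⟩
    intro b hb
    have hb2 := hB2 b hb
    by_cases hble : b ≤ n + 1
    · obtain ⟨r, hr⟩ := hAdm b hb
      refine ⟨r, ?_⟩
      intro a ha hd
      rcases ha with ha | ha
      · exact hr a ha hd
      · rw [Set.mem_singleton_iff] at ha
        subst ha
        have hbP : b ∣ P := by
          apply Finset.dvd_prod_of_mem
          simp only [Finset.mem_filter, Finset.mem_range]
          exact ⟨by omega, hb⟩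
        have hdm : (b : ℤ) ∣ m - a₀ := by
          have heq : m - a₀ = (k : ℤ) * (P : ℤ) := by rw [hm]; ring
          rw [heq]
          exact Dvd.dvd.mul_left (Int.natCast_dvd_natCast.mpr hbP) _
        have : (b : ℤ) ∣ a₀ - r := by
          have := dvd_sub hd hdm
          have heq : m - r - (m - a₀) = a₀ - r := by ring
          rwa [heq] at this
        exact hr a₀ ha₀ this
    · -- pigeonhole case: b ≥ n + 2
      set T : Finset ℤ := (insert m F).image (fun a => a % (b : ℤ)) with hT
      have hTcard : T.card ≤ n + 1 := by
        calc T.card ≤ (insert m F).card := Finset.card_image_le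
          _ ≤ F.card + 1 := Finset.card_insert_le _ _
      have hIcoCard : (Finset.Ico (0 : ℤ) (b : ℤ)).card = b := by
        simp [Int.toNat_natCast]
      have hlt : T.card < (Finset.Ico (0 : ℤ) (b : ℤ)).card := by
        rw [hIcoCard]; omega
      have hex : ∃ r ∈ Finset.Ico (0 : ℤ) (b : ℤ), r ∉ T := by
        by_contra hcon
        push_neg at hcon
        have : (Finset.Ico (0 : ℤ) (b : ℤ)) ⊆ T := fun r hr => hcon r hr
        exact absurd (Finset.card_le_card this) (by omega)
      obtain ⟨r, hrI, hrT⟩ := hex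
      rw [Finset.mem_Ico] at hrI
      refine ⟨r, ?_⟩
      intro a ha hd
      have haT : a % (b : ℤ) ∈ T := by
        apply Finset.mem_image_of_mem
        rcases ha with ha | ha
        · exact Finset.mem_insert_of_mem ((Set.Finite.mem_toFinset hA).mpr ha)
        · rw [Set.mem_singleton_iff] at ha; subst ha; exact Finset.mem_insert_self _ _
      have hmod : a % (b : ℤ) = r % (b : ℤ) :=
        Int.emod_eq_emod_iff_emod_sub_eq_zero.mpr (Int.emod_eq_zero_of_dvd hd)
      have hrr : r % (b : ℤ) = r := Int.emod_eq_of_lt hrI.1 hrI.2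
      rw [hmod, hrr] at haT
      exact hrT haT

/-- For any `B ⊆ ℕ \ {1}`, the space `X_B` (with the product topology on `{0,1}^ℤ`)
has no isolated points; in particular, every finite `B`-admissible set `A ⊆ ℤ` can be
enlarged by a single arbitrarily large element `m` keeping admissibility. -/
theorem admissible_subshift_no_isolated_points (B : Set ℕ)
    (hB2 : ∀ b ∈ B, 2 ≤ b) :
    (∀ x ∈ XB B, AccPt x (Filter.principal (XB B))) ∧
    (∀ A : Set ℤ, A.Finite → IsAdmissible B A → ∀ L : ℕ,
      ∃ m : ℤ, (L : ℤ) < m ∧ IsAdmissible B (A ∪ {m})) := by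
  classical
  refine ⟨?_, extend_lemma B hB2⟩
  intro x hx
  rw [accPt_iff_nhds]
  intro U hU
  rw [nhds_pi] at hU
  obtain ⟨I, hIfin, t, ht, hsub⟩ := Filter.mem_pi.mp hU
  by_cases h : ∃ i, i ∉ I ∧ x i = true
  · obtain ⟨i, hiI, hxi⟩ := h
    refine ⟨Function.update x i false, ⟨?_, ?_⟩, ?_⟩
    · apply hsub
      intro j hj
      have hji : j ≠ i := fun e => hiI (e ▸ hj)
      rw [Function.update_of_ne hji]
      exact mem_of_mem_nhds (ht j)
    · have hsb : {j : ℤ | Function.update x i false j = true} ⊆ {j | x j = true} := by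
        intro j hj
        by_cases hji : j = i
        · subst hji; simp at hj
        · rwa [Set.mem_setOf_eq, Function.update_of_ne hji] at hj
      exact isAdmissible_mono hsb hx
    · intro he
      have := congrFun he i
      simp [hxi] at this
  · push_neg at h
    have hsupp : {i : ℤ | x i = true} ⊆ I := by
      intro i hi
      by_contra hiI
      exact h i hiI hi
    have hfin : ({i : ℤ | x i = true}).Finite := hIfin.subset hsupp
    obtain ⟨u, hu⟩ := hIfin.bddAbove
    obtain ⟨m, hm, hadm⟩ := extend_lemma B hB2 _ hfin hx u.toNat
    have hmI : m ∉ I := by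
      intro hmem
      have h1 : m ≤ u := hu hmem
      have h2 : u ≤ (u.toNat : ℤ) := Int.self_le_toNat u
      omega
    have hxm : x m = false := by
      by_contra hc
      have : x m = true := by
        cases hxv : x m
        · exact absurd hxv hc
        · rfl
      exact hmI (hsupp this)
    refine ⟨Function.update x m true, ⟨?_, ?_⟩, ?_⟩
    · apply hsub
      intro j hj
      have hjm : j ≠ m := fun e => hmI (e ▸ hj)
      rw [Function.update_of_ne hjm]
      exact mem_of_mem_nhds (ht j)
    · have hset : {j : ℤ | Function.update x m true j = true}
          = {j : ℤ | x j = true} ∪ {m} := by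
        ext j
        by_cases hjm : j = m
        · subst hjm; simp
        · simp [Function.update_of_ne hjm, hjm]
      show IsAdmissible B _
      rw [hset]
      exact hadm
    · intro he
      have := congrFun he m
      simp [hxm] at this
end

section
/- Dickson's conjecture implies the following stronger statement (Dickson's conjecture*): let Φ = {f_i(x) = a_i + b_i·x : i = 1,…,k} and Γ = {g_j(x) = c_j + d_j·x : j = 1,…,k'} with a_i, b_i, c_j, d_j ∈ ℤ, b_i ≥ 1, d_j ≥ 1, and suppose that neither g_j nor −g_j belongs to Φ for any j. If Φ satisfies Dickson's condition, then there exist infinitely many natural numbers m such that f_1(m),…,f_k(m) are all prime and g_1(m),…,g_{k'}(m) are all composite. -/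
/-- Dickson's conjecture: if the family of linear polynomials `aᵢ + bᵢ·x` (with `bᵢ ≥ 1`)
satisfies Dickson's condition (for every prime `p` there is `y` with
`p ∤ ∏ᵢ (aᵢ + bᵢ·y)`), then there are infinitely many `m ∈ ℕ` such that all the values
`aᵢ + bᵢ·m` are prime. -/
def DicksonConjecture : Prop :=
  ∀ (k : ℕ) (a b : Fin k → ℤ), (∀ i, 1 ≤ b i) →
    (∀ p : ℕ, p.Prime → ∃ y : ℤ, ¬ ((p : ℤ) ∣ ∏ i, (a i + b i * y))) →
    ∀ N : ℕ, ∃ m : ℕ, N ≤ m ∧ ∀ i, Prime (a i + b i * (m : ℤ))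

/-!
If `g = c + d·x` is proportional to some `fᵢ`, Dickson's condition forces `gcd (aᵢ, bᵢ) = 1`,
hence `g = t·fᵢ` with an integer `t ≥ 2` (as `g ≠ fᵢ`), and `g(m)` is composite whenever
`fᵢ(m)` is prime.
Every other `g` can be made divisible by a fixed prime `q` along an arithmetic progression
`m ≡ x (mod q)`: choose `q` larger than `|d|` and all `|aᵢ d - bᵢ c|`, solve `q ∣ g(x)`, and then
`q ∤ fᵢ(x)`, so the substituted family `fᵢ(x + q·y)` still satisfies Dickson's condition.
Treating these `g` one after another and applying Dickson's conjecture to the final substituted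
family gives the values `m`; each such `g(m)` is a multiple of its `q` exceeding `q` once `m` is
large.
-/

open Finset

def DicksonCondition {ι : Type*} [Fintype ι] (a b : ι → ℤ) : Prop :=
  ∀ p : ℕ, p.Prime → ∃ y : ℤ, ¬ (p : ℤ) ∣ ∏ i, (a i + b i * y)

def IsComposite (n : ℤ) : Prop :=
  ¬ Prime n ∧ 1 < n.natAbs

theorem isComposite_mul {s t : ℤ} (hs : 1 < s.natAbs) (ht : 1 < t.natAbs) :
    IsComposite (s * t) := by
  refine ⟨fun h => ?_, ?_⟩
  · rcases of_irreducible_mul h.irreducible with hu | hu <;>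
      rw [Int.isUnit_iff_natAbs_eq] at hu <;> omega
  · rw [Int.natAbs_mul]
    nlinarith

theorem isComposite_of_prime_dvd {q : ℕ} {n : ℤ} (hq : q.Prime) (hqn : (q : ℤ) ∣ n)
    (hlt : q < n.natAbs) : IsComposite n := by
  obtain ⟨s, rfl⟩ := hqn
  rw [Int.natAbs_mul, Int.natAbs_natCast] at hlt
  have hs : 1 < s.natAbs := by
    by_contra! hs
    nlinarith
  exact isComposite_mul (by simpa using hq.one_lt) hs

theorem IsCoprime.exists_eq_mul_of_mul_eq_mul {R : Type*} [CommRing R] [IsDomain R]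
    {a b c d : R} (hab : IsCoprime a b) (hb : b ≠ 0) (h : a * d = b * c) :
    ∃ t, c = t * a ∧ d = t * b := by
  obtain ⟨t, rfl⟩ : b ∣ d := hab.symm.dvd_of_dvd_mul_left ⟨c, h⟩
  refine ⟨t, mul_left_cancel₀ hb ?_, mul_comm _ _⟩
  linear_combination -h

theorem exists_dvd_add_mul {q d : ℤ} (hq : Prime q) (hd : ¬ q ∣ d) (c : ℤ) :
    ∃ x, q ∣ c + d * x := by
  obtain ⟨u, v, huv⟩ := hq.coprime_iff_not_dvd.mpr hd
  exact ⟨-c * v, c * u, by linear_combination -c * huv⟩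

namespace DicksonCondition

variable {ι : Type*} [Fintype ι] {a b : ι → ℤ}

theorem isCoprime (h : DicksonCondition a b) (i : ι) : IsCoprime (a i) (b i) := by
  rw [Int.isCoprime_iff_nat_coprime]
  refine Nat.coprime_of_dvd fun p hp hpa hpb => ?_
  obtain ⟨y, hy⟩ := h p hp
  have hpf : (p : ℤ) ∣ a i + b i * y :=
    dvd_add (Int.ofNat_dvd_left.mpr hpa) ((Int.ofNat_dvd_left.mpr hpb).mul_right y)
  exact hy (hpf.trans (dvd_prod_of_mem _ (mem_univ i)))

theorem isComposite_of_mul_eq_mul (h : DicksonCondition a b) {i : ι} {c d m : ℤ}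
    (hb : 1 ≤ b i) (hd : 1 ≤ d) (hne : ¬(a i = c ∧ b i = d)) (hcd : a i * d = b i * c)
    (hm : Prime (a i + b i * m)) : IsComposite (c + d * m) := by
  obtain ⟨t, rfl, rfl⟩ := (h.isCoprime i).exists_eq_mul_of_mul_eq_mul (by omega) hcd
  have ht_ne : t ≠ 1 := by
    rintro rfl
    simp at hne
  have ht : 1 < t.natAbs := by
    have : 0 < t := by nlinarith
    omega
  rw [show t * a i + t * b i * m = t * (a i + b i * m) by ring]
  exact isComposite_mul ht (Int.prime_iff_natAbs_prime.mp hm).one_lt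

/-- Modulo a prime `p ∤ M`, the substitution `y ↦ x + M y` is onto, so it keeps a witness `y`. -/
theorem comp_affine (h : DicksonCondition a b) {x M : ℤ}
    (hM : ∀ p : ℕ, p.Prime → (p : ℤ) ∣ M → ¬ (p : ℤ) ∣ ∏ i, (a i + b i * x)) :
    DicksonCondition (fun i => a i + b i * x) (fun i => b i * M) := by
  intro p hp
  by_cases hpM : (p : ℤ) ∣ M
  · exact ⟨0, by simpa using hM p hp hpM⟩
  obtain ⟨y, hy⟩ := h p hp
  obtain ⟨u, v, huv⟩ := (Nat.prime_iff_prime_int.mp hp).coprime_iff_not_dvd.mpr hpM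
  refine ⟨v * (y - x), fun hdvd => hy ((Int.ModEq.dvd_iff (Int.ModEq.prod fun i _ => ?_)).mp hdvd)⟩
  rw [Int.modEq_iff_dvd]
  exact ⟨b i * (y - x) * u, by linear_combination -(b i * (y - x)) * huv⟩

theorem exists_prime_dvd_comp_affine (h : DicksonCondition a b) {c d : ℤ} (hd : d ≠ 0)
    (hcd : ∀ i, a i * d ≠ b i * c) :
    ∃ (q : ℕ) (x : ℤ), q.Prime ∧ (q : ℤ) ∣ c + d * x ∧
      DicksonCondition (fun i => a i + b i * x) (fun i => b i * q) := by
  obtain ⟨q, hBq, hq⟩ := Nat.exists_infinite_primes (d.natAbs + ∑ i, (a i * d - b i * c).natAbs + 1)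
  have hqZ := Nat.prime_iff_prime_int.mp hq
  have not_dvd {n : ℤ} (hn : n ≠ 0) (hlt : n.natAbs < q) : ¬ (q : ℤ) ∣ n := fun hdvd =>
    hn (Int.eq_zero_of_dvd_of_natAbs_lt_natAbs hdvd (by simpa using hlt))
  obtain ⟨x, hx⟩ := exists_dvd_add_mul hqZ (not_dvd hd (by omega)) c
  have hfx (i : ι) : ¬ (q : ℤ) ∣ a i + b i * x := by
    intro hi
    refine not_dvd (sub_ne_zero.mpr (hcd i)) ?_ ?_
    · have := single_le_sum (fun j _ => Nat.zero_le _) (mem_univ i)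
        (f := fun i => (a i * d - b i * c).natAbs)
      omega
    · rw [show a i * d - b i * c = d * (a i + b i * x) - b i * (c + d * x) by ring]
      exact dvd_sub (hi.mul_left _) (hx.mul_left _)
  refine ⟨q, x, hq, hx, h.comp_affine fun p hp hpq => ?_⟩
  rw [(Nat.prime_dvd_prime_iff_eq hp hq).mp (Int.natCast_dvd_natCast.mp hpq),
    hqZ.dvd_finsetProd_iff]
  simpa using hfx

theorem exists_comp_affine_forall_prime_dvd {κ : Type*} (h : DicksonCondition a b)
    (c d : κ → ℤ) (T : Finset κ) (hd : ∀ j ∈ T, d j ≠ 0)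
    (hcd : ∀ j ∈ T, ∀ i, a i * d j ≠ b i * c j) :
    ∃ x M : ℤ, 0 < M ∧ DicksonCondition (fun i => a i + b i * x) (fun i => b i * M) ∧
      ∀ j ∈ T, ∃ q : ℕ, q.Prime ∧ (q : ℤ) ∣ c j + d j * x ∧ (q : ℤ) ∣ M := by
  classical
  induction T using Finset.induction_on with
  | empty => exact ⟨0, 1, one_pos, by simpa using h, by simp⟩
  | @insert j T hj ih =>
    obtain ⟨x, M, hM, hDM, hT⟩ := ih (fun j' hj' => hd j' (mem_insert_of_mem hj'))
      (fun j' hj' => hcd j' (mem_insert_of_mem hj'))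
    have hcd' (i : ι) : (a i + b i * x) * (d j * M) ≠ b i * M * (c j + d j * x) := by
      intro hi
      refine hcd j (mem_insert_self j T) i (mul_right_cancel₀ hM.ne' ?_)
      linear_combination hi
    obtain ⟨q, y, hq, hqy, hDq⟩ :=
      hDM.exists_prime_dvd_comp_affine (mul_ne_zero (hd j (mem_insert_self j T)) hM.ne') hcd'
    refine ⟨x + M * y, M * q, mul_pos hM (by exact_mod_cast hq.pos), ?_, fun j' hj' => ?_⟩
    · convert hDq using 2 <;> ring
    have hshift : c j' + d j' * (x + M * y) = c j' + d j' * x + d j' * y * M := by ring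
    rcases mem_insert.mp hj' with rfl | hj'
    · exact ⟨q, hq, by rw [hshift]; convert hqy using 1; ring, dvd_mul_left _ _⟩
    · obtain ⟨q', hq', hq'x, hq'M⟩ := hT j' hj'
      exact ⟨q', hq', by rw [hshift]; exact dvd_add hq'x (hq'M.mul_left _), hq'M.mul_right _⟩

end DicksonCondition

/-- Dickson's conjecture implies its stronger form (Dickson's conjecture*): given
`Φ = {aᵢ + bᵢ·x}` satisfying Dickson's condition and `Γ = {cⱼ + dⱼ·x}` with
`±gⱼ ∉ Φ`, there are infinitely many `m ∈ ℕ` with all `fᵢ(m)` prime and all `gⱼ(m)`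
composite. -/
theorem dickson_implies_dickson_star (hDickson : DicksonConjecture) :
    ∀ (k k' : ℕ) (a b : Fin k → ℤ) (c d : Fin k' → ℤ),
      (∀ i, 1 ≤ b i) → (∀ j, 1 ≤ d j) →
      (∀ i j, ¬(a i = c j ∧ b i = d j) ∧ ¬(a i = -(c j) ∧ b i = -(d j))) →
      (∀ p : ℕ, p.Prime → ∃ y : ℤ, ¬ ((p : ℤ) ∣ ∏ i, (a i + b i * y))) →
      ∀ N : ℕ, ∃ m : ℕ, N ≤ m ∧
        (∀ i, Prime (a i + b i * (m : ℤ))) ∧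
        (∀ j, ¬ Prime (c j + d j * (m : ℤ)) ∧ 1 < (c j + d j * (m : ℤ)).natAbs) := by
  intro k k' a b c d hb hd hne hcond N
  have hD : DicksonCondition a b := hcond
  set T := univ.filter fun j => ∀ i, a i * d j ≠ b i * c j
  obtain ⟨x, M, hM, hDM, hT⟩ := hD.exists_comp_affine_forall_prime_dvd c d T
    (fun j _ => by linarith [hd j]) (fun j hj => (mem_filter.mp hj).2)
  obtain ⟨n, hn, hprime⟩ := hDickson k _ _ (fun i => one_le_mul_of_one_le_of_one_le (hb i) hM) hDM
    (N + x.natAbs + M.natAbs + ∑ j, (c j).natAbs + 1)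
  have hMn : (n : ℤ) ≤ M * n := le_mul_of_one_le_left n.cast_nonneg hM
  obtain ⟨m, hm⟩ : ∃ m : ℕ, x + M * n = m := Int.eq_ofNat_of_zero_le (by omega)
  have hfm (i : Fin k) : Prime (a i + b i * m) := by
    rw [← hm]
    convert hprime i using 1
    ring
  refine ⟨m, by omega, hfm, fun j => ?_⟩
  by_cases hj : j ∈ T
  · obtain ⟨q, hq, hqx, hqM⟩ := hT j hj
    have hcj := single_le_sum (fun j _ => Nat.zero_le _) (mem_univ j) (f := fun j => (c j).natAbs)
    have hq_le := Int.le_of_dvd hM hqM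
    have hdm : (m : ℤ) ≤ d j * m := le_mul_of_one_le_left m.cast_nonneg (hd j)
    refine isComposite_of_prime_dvd hq ?_ (by omega)
    rw [← hm, show c j + d j * (x + M * n) = c j + d j * x + d j * n * M by ring]
    exact dvd_add hqx (hqM.mul_left _)
  · obtain ⟨i, hi⟩ : ∃ i, a i * d j = b i * c j := by simpa [T] using hj
    exact hD.isComposite_of_mul_eq_mul (hb i) (hd j) (hne i j).1 hi (hfm i)
end

section
/- Let M < N be natural numbers and let A ⊆ [M+1, N] ∩ ℤ be a ℙ-admissible set. Then there exists a finite set A' ⊆ ℤ ∩ [N+1, ∞) such that A ∪ A' is ℙ-admissible, while for every i ∈ ([M+1, N] ∩ ℤ) \ A the set A ∪ A' ∪ {i} is not ℙ-admissible. -/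
lemma dvd_small_false {p : ℕ} {d : ℤ} (h : (p:ℤ) ∣ d) (h2 : d ≠ 0) (h3 : |d| < p) : False := by
  have h4 : (p:ℤ) ∣ |d| := (dvd_abs _ _).mpr h
  have := Int.le_of_dvd (abs_pos.mpr h2) h4
  omega

lemma crt0 (E : Finset ℕ) (hcop : (E : Set ℕ).Pairwise Nat.Coprime) (f : ℕ → ℤ) :
    ∃ x : ℤ, ∀ p ∈ E, (p : ℤ) ∣ x - f p := by
  classical
  induction E using Finset.induction_on with
  | empty => exact ⟨0, by simp⟩
  | @insert a E ha ih =>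
    obtain ⟨x', hx'⟩ := ih (hcop.mono (by simp [Finset.subset_insert]))
    have hcop2 : Nat.Coprime a (∏ p ∈ E, p) := by
      apply Nat.Coprime.prod_right
      intro q hq
      exact hcop (by simp) (by simp [hq]) (by rintro rfl; exact ha hq)
    obtain ⟨u, v, huv⟩ := Nat.isCoprime_iff_coprime.mpr hcop2
    set m : ℤ := ((∏ p ∈ E, p : ℕ) : ℤ) with hm
    refine ⟨u * a * x' + v * m * f a, ?_⟩
    intro p hp
    rcases Finset.mem_insert.mp hp with rfl | hp
    · exact ⟨u * (x' - f p), by linear_combination f p * huv⟩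
    · have h1 : (p:ℤ) ∣ m := by
        have h0 : p ∣ ∏ n ∈ E, n := Finset.dvd_prod_of_mem (fun n => n) hp
        rw [hm]; exact_mod_cast h0
      have h2 : (u * a * x' + v * m * f a) - x' = m * (v * (f a - x')) + (u * a + v * m - 1) * x' := by ring
      have h3 : (p:ℤ) ∣ (u * a * x' + v * m * f a) - x' := by
        rw [h2, huv]; simpa using Dvd.dvd.mul_right h1 _
      have := dvd_add h3 (hx' p hp)
      simpa using this

lemma crt (E : Finset ℕ) (hpos : ∀ p ∈ E, p ≠ 0) (hcop : (E : Set ℕ).Pairwise Nat.Coprime)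
    (f : ℕ → ℤ) (L : ℤ) : ∃ x : ℤ, L ≤ x ∧ ∀ p ∈ E, (p : ℤ) ∣ x - f p := by
  obtain ⟨x₀, hx₀⟩ := crt0 E hcop f
  set m : ℤ := ((∏ p ∈ E, p : ℕ) : ℤ) with hm
  have hm1 : 1 ≤ m := by
    have : 0 < ∏ p ∈ E, p := Finset.prod_pos fun p hp => Nat.pos_of_ne_zero (hpos p hp)
    rw [hm]; exact_mod_cast this
  refine ⟨x₀ + m * max 0 (L - x₀), ?_, ?_⟩
  · have h0 : 0 ≤ max 0 (L - x₀) := le_max_left _ _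
    nlinarith [le_max_right 0 (L - x₀)]
  · intro p hp
    have h1 : (p:ℤ) ∣ m := by
      have h0 : p ∣ ∏ n ∈ E, n := Finset.dvd_prod_of_mem (fun n => n) hp
      rw [hm]; exact_mod_cast h0
    have : x₀ + m * max 0 (L - x₀) - f p = (x₀ - f p) + m * max 0 (L - x₀) := by ring
    rw [this]
    exact dvd_add (hx₀ p hp) (h1.mul_right _)

lemma miss_residue (p : ℕ) (hp : p.Prime) (F : Finset ℤ) (hF : F.card < p) :
    ∃ r : ℤ, ∀ a ∈ F, ¬ (p:ℤ) ∣ a - r := by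
  classical
  haveI : Fact p.Prime := ⟨hp⟩
  have hcard : (F.image (Int.cast : ℤ → ZMod p)).card < Fintype.card (ZMod p) := by
    rw [ZMod.card]
    exact lt_of_le_of_lt Finset.card_image_le hF
  obtain ⟨z, hz⟩ : ∃ z : ZMod p, z ∉ F.image (Int.cast : ℤ → ZMod p) := by
    by_contra h
    push_neg at h
    have := Finset.eq_univ_iff_forall.mpr h
    rw [this, Finset.card_univ] at hcard
    exact lt_irrefl _ hcard
  refine ⟨(z.val : ℤ), fun a ha hdvd => hz ?_⟩
  have : ((a - (z.val : ℤ) : ℤ) : ZMod p) = 0 := (ZMod.intCast_zmod_eq_zero_iff_dvd _ p).mpr hdvd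
  push_cast at this
  have haz : (a : ZMod p) = z := by
    have hv : ((z.val : ℕ) : ZMod p) = z := by rw [ZMod.natCast_val, ZMod.cast_id]
    rw [sub_eq_zero] at this
    rw [this]
    exact_mod_cast hv
  exact Finset.mem_image.mpr ⟨a, ha, haz⟩

lemma dvd_trans_sub {p x a b : ℤ} (h1 : p ∣ x - a) (h2 : p ∣ x - b) : p ∣ b - a := by
  obtain ⟨c, hc⟩ := h1; obtain ⟨d, hd⟩ := h2; exact ⟨c - d, by linear_combination hc - hd⟩

set_option maxHeartbeats 2000000 in
/-- For `M < N` and a `ℙ`-admissible set `A ⊆ [M+1, N]`, there is a finite set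
`A' ⊆ [N+1, ∞)` such that `A ∪ A'` is `ℙ`-admissible, while `A ∪ A' ∪ {i}` is not,
for each `i ∈ [M+1, N] \ A`. -/
theorem maximal_admissible_extension (M N : ℕ) (hMN : M < N)
    (A : Set ℤ) (hA : A ⊆ Set.Icc ((M : ℤ) + 1) (N : ℤ))
    (hadm : IsAdmissible {p : ℕ | p.Prime} A) :
    ∃ A' : Finset ℤ, (∀ a ∈ A', (N : ℤ) + 1 ≤ a) ∧
      IsAdmissible {p : ℕ | p.Prime} (A ∪ (A' : Set ℤ)) ∧
      ∀ i ∈ Set.Icc ((M : ℤ) + 1) (N : ℤ), i ∉ A →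
        ¬ IsAdmissible {p : ℕ | p.Prime} (A ∪ (A' : Set ℤ) ∪ {i}) := by
  classical
  choose rA hrA using hadm
  have hAfin : A.Finite := (Set.finite_Icc _ _).subset hA
  set FA : Finset ℤ := hAfin.toFinset with hFAdef
  set S : Finset ℤ := (Finset.Icc ((M:ℤ)+1) (N:ℤ)).filter (fun i => i ∉ A) with hSdef
  have hSmem : ∀ i : ℤ, i ∈ S ↔ ((M:ℤ)+1 ≤ i ∧ i ≤ N ∧ i ∉ A) := by
    intro i; simp [hSdef, Finset.mem_filter, Finset.mem_Icc, and_assoc]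
  obtain ⟨P, hPp, hPge, hPinj0⟩ :
      ∃ P : ℤ → ℕ, (∀ i, (P i).Prime) ∧ (∀ i : ℤ, N + 1 + i.toNat ≤ P i) ∧
        (∀ i j : ℤ, P i = P j → i.toNat = j.toNat) := by
    refine ⟨fun i => Nat.nth Nat.Prime (N + 1 + i.toNat), fun i => Nat.prime_nth_prime _,
      fun i => (Nat.nth_strictMono Nat.infinite_setOf_prime).le_apply, fun i j h => ?_⟩
    have := (Nat.nth_strictMono Nat.infinite_setOf_prime).injective h
    omega
  have hPgtN : ∀ i : ℤ, (N : ℤ) < (P i : ℤ) := by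
    intro i; have := hPge i; omega
  have hPinj : ∀ i ∈ S, ∀ j ∈ S, P i = P j → i = j := by
    intro i hi j hj hij
    have h1 := (hSmem i).mp hi
    have h2 := (hSmem j).mp hj
    have h3 := hPinj0 i j hij
    omega
  set K : ℕ := FA.card + S.sum (fun i => P i) with hKdef
  set Q : Finset ℕ := (Finset.range (K+1)).filter (fun q => q.Prime ∧ ∀ i ∈ S, q ≠ P i)
    with hQdef
  set E : Finset ℕ := Q ∪ S.image P with hEdef
  have hQmem : ∀ q, q ∈ Q ↔ (q ≤ K ∧ q.Prime ∧ ∀ i ∈ S, q ≠ P i) := by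
    intro q; simp [hQdef, Nat.lt_succ_iff]
  have hEprime : ∀ p ∈ E, p.Prime := by
    intro p hp
    rcases Finset.mem_union.mp hp with h | h
    · exact ((hQmem p).mp h).2.1
    · obtain ⟨i, _, rfl⟩ := Finset.mem_image.mp h; exact hPp i
  have hEpos : ∀ p ∈ E, p ≠ 0 := fun p hp => (hEprime p hp).ne_zero
  have hcop : (E : Set ℕ).Pairwise Nat.Coprime := by
    intro p hp q hq hne
    exact (Nat.coprime_primes (hEprime p hp) (hEprime q hq)).mpr hne
  set r' : ℕ → ℤ := fun q => if h : q.Prime then rA q h + 1 else 0 with hr'def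
  set f : ℤ → ℕ → ℕ → ℤ :=
    fun i t p => if p = P i then (t:ℤ) else if p ∈ Q then r' p else -1 with hfdef
  have hcrt : ∀ i : ℤ, ∀ t : ℕ, ∃ x : ℤ, (N:ℤ)+1 ≤ x ∧ ∀ p ∈ E, (p:ℤ) ∣ x - f i t p :=
    fun i t => crt E hEpos hcop (f i t) _
  choose x hxL hxd using hcrt
  set A' : Finset ℤ :=
    S.biUnion (fun i => ((Finset.range (P i)).filter (fun t => t ≠ i.toNat)).image (x i))
    with hA'def
  have hA'mem : ∀ a : ℤ, a ∈ A' ↔ ∃ i ∈ S, ∃ t, t < P i ∧ t ≠ i.toNat ∧ x i t = a := by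
    intro a
    simp only [hA'def, Finset.mem_biUnion, Finset.mem_image, Finset.mem_filter,
      Finset.mem_range]
    tauto
  have hPiE : ∀ i ∈ S, P i ∈ E := fun i hi =>
    Finset.mem_union_right _ (Finset.mem_image_of_mem _ hi)
  have hPiQ : ∀ i ∈ S, P i ∉ Q := fun i hi h => ((hQmem _).mp h).2.2 i hi rfl
  have hx1 : ∀ i ∈ S, ∀ t : ℕ, (P i : ℤ) ∣ x i t - (t : ℤ) := by
    intro i hi t
    simpa [hfdef] using hxd i t (P i) (hPiE i hi)
  have hx2 : ∀ i ∈ S, ∀ j ∈ S, i ≠ j → ∀ t : ℕ, (P i : ℤ) ∣ x j t + 1 := by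
    intro i hi j hj hij t
    have hne : P i ≠ P j := fun h => hij (hPinj i hi j hj h)
    simpa [hfdef, hne, hPiQ i hi, sub_neg_eq_add] using hxd j t (P i) (hPiE i hi)
  have hx3 : ∀ p ∈ Q, ∀ j ∈ S, ∀ t : ℕ, (p : ℤ) ∣ x j t - r' p := by
    intro p hp j hj t
    have hne : p ≠ P j := ((hQmem p).mp hp).2.2 j hj
    simpa [hfdef, hne, hp] using hxd j t p (Finset.mem_union_left _ hp)
  refine ⟨A', ?_, ?_, ?_⟩
  · intro a ha
    obtain ⟨i, hi, t, ht1, ht2, rfl⟩ := (hA'mem a).mp ha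
    exact hxL i t
  · intro p hp
    have hp' : p.Prime := hp
    by_cases hpi : ∃ i ∈ S, p = P i
    · obtain ⟨i, hi, rfl⟩ := hpi
      obtain ⟨hiM, hiN, hiA⟩ := (hSmem i).mp hi
      refine ⟨i, ?_⟩
      intro a ha hdvd
      rcases ha with haA | haA'
      · have h1 := hA haA
        simp only [Set.mem_Icc] at h1
        have h2 : a ≠ i := fun h => hiA (h ▸ haA)
        have h3 := hPgtN i
        refine dvd_small_false hdvd (by omega) (by rw [abs_lt]; omega)
      · obtain ⟨j, hj, t, ht1, ht2, rfl⟩ := (hA'mem _).mp haA'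
        by_cases hji : j = i
        · subst hji
          have hd := hx1 j hj t
          have hd2 : (P j : ℤ) ∣ (t : ℤ) - j := dvd_trans_sub hdvd hd
          have h3 := hPgtN j
          refine dvd_small_false hd2 (by omega) (by rw [abs_lt]; omega)
        · have hd := hx2 i hi j hj (fun h => hji h.symm) t
          have hd' : (P i : ℤ) ∣ x j t - (-1) := by simpa [sub_neg_eq_add] using hd
          have hd2 : (P i : ℤ) ∣ i - (-1) := dvd_trans_sub hd' hdvd
          have h3 := hPge i
          refine dvd_small_false hd2 (by omega) (by rw [abs_lt]; omega)
    · by_cases hq : p ∈ Q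
      · refine ⟨rA p hp, ?_⟩
        intro a ha hdvd
        rcases ha with haA | haA'
        · exact hrA p hp a haA hdvd
        · obtain ⟨j, hj, t, ht1, ht2, rfl⟩ := (hA'mem _).mp haA'
          have hd := hx3 p hq j hj t
          have hr'p : r' p = rA p hp + 1 := by simp [hr'def, hp']
          rw [hr'p] at hd
          have hd2 : (p : ℤ) ∣ rA p hp - (rA p hp + 1) := dvd_trans_sub hd hdvd
          have h2 : 2 ≤ p := hp'.two_le
          refine dvd_small_false hd2 (by omega) (by rw [abs_lt]; omega)
      · push_neg at hpi
        have hpK : K < p := by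
          by_contra h
          push_neg at h
          exact hq ((hQmem p).mpr ⟨h, hp', hpi⟩)
        have hA'card : A'.card ≤ S.sum (fun i => P i) := by
          rw [hA'def]
          refine le_trans Finset.card_biUnion_le (Finset.sum_le_sum ?_)
          intro i hi
          refine le_trans Finset.card_image_le (le_trans (Finset.card_filter_le _ _) ?_)
          simp
        have hKval : K = FA.card + S.sum (fun i => P i) := hKdef
        have hcard : (FA ∪ A').card < p := by
          have := Finset.card_union_le FA A'
          omega
        obtain ⟨r, hr⟩ := miss_residue p hp' (FA ∪ A') hcard
        refine ⟨r, fun a ha => hr a ?_⟩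
        rcases ha with h | h
        · exact Finset.mem_union_left _ (hAfin.mem_toFinset.mpr h)
        · exact Finset.mem_union_right _ h
  · intro i hi hiA hbad
    simp only [Set.mem_Icc] at hi
    have hiS : i ∈ S := (hSmem i).mpr ⟨hi.1, hi.2, hiA⟩
    obtain ⟨r, hr⟩ := hbad (P i) (hPp i)
    have hppos : (0:ℤ) < (P i : ℤ) := by exact_mod_cast (hPp i).pos
    set t₀ : ℕ := (r % (P i : ℤ)).toNat with ht₀def
    have hmod0 : 0 ≤ r % (P i:ℤ) := Int.emod_nonneg r (by omega)
    have hmod1 : r % (P i:ℤ) < (P i:ℤ) := Int.emod_lt_of_pos r hppos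
    have hdm : (P i:ℤ) ∣ r - (t₀:ℤ) := by
      have hcast : (t₀ : ℤ) = r % (P i:ℤ) := by rw [ht₀def, Int.toNat_of_nonneg hmod0]
      rw [hcast]
      exact ⟨r / (P i:ℤ), by rw [Int.emod_def]; ring⟩
    by_cases ht : t₀ = i.toNat
    · have hdi : (P i:ℤ) ∣ r - i := by
        have : (t₀ : ℤ) = i := by omega
        rwa [this] at hdm
      refine hr i (Or.inr rfl) ?_
      obtain ⟨c, hc⟩ := hdi
      exact ⟨-c, by linear_combination -hc⟩
    · have ht1 : t₀ < P i := by omega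
      have hmem : x i t₀ ∈ A ∪ (A' : Set ℤ) ∪ {i} :=
        Or.inl (Or.inr ((hA'mem _).mpr ⟨i, hiS, t₀, ht1, ht, rfl⟩))
      have h1 := hx1 i hiS t₀
      refine hr _ hmem ?_
      obtain ⟨c, hc⟩ := h1
      obtain ⟨d, hd⟩ := hdm
      exact ⟨c - d, by linear_combination hc - hd⟩
end

section
/- Assume Dickson's conjecture. Let M, N ∈ ℕ satisfy √N ≤ M < N and N − M < √N, and suppose ⌊√N⌋ is not prime. Then for every set A ⊆ P₂ ∩ [M+1, N] there exists n ∈ ℕ such that for every q ∈ {M+1,…,N} one has n + q ∈ P₂ if and only if q ∈ A (equivalently, P₂ ∩ [n+M+1, n+N] = {n + a : a ∈ A}). -/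
/-- `Omega n` is the number of prime factors of `n` counted with multiplicity. -/
def Omega (n : ℕ) : ℕ := n.primeFactorsList.length

lemma Omega_mul {a b : ℕ} (ha : a ≠ 0) (hb : b ≠ 0) : Omega (a*b) = Omega a + Omega b := by
  unfold Omega
  rw [(Nat.perm_primeFactorsList_mul ha hb).length_eq, List.length_append]

lemma Omega_prime {p : ℕ} (hp : p.Prime) : Omega p = 1 := by
  unfold Omega; rw [Nat.primeFactorsList_prime hp]; rfl

lemma prime_of_Omega_eq_one {x : ℕ} (h : Omega x = 1) : x.Prime := by
  have hx : x ≠ 0 := by rintro rfl; simp [Omega] at h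
  obtain ⟨p, hp⟩ := List.length_eq_one_iff.mp h
  have hprod := Nat.prod_primeFactorsList hx
  rw [hp] at hprod
  simp at hprod
  rw [← hprod]
  exact Nat.prime_of_mem_primeFactorsList (by rw [hp]; exact List.mem_singleton_self p)

lemma le_Omega_of_pow_dvd {p k x : ℕ} (hp : p.Prime) (hd : p^k ∣ x) (hx : x ≠ 0) :
    k ≤ Omega x := by
  obtain ⟨t, rfl⟩ := hd
  have ht : t ≠ 0 := by rintro rfl; simp at hx
  rw [Omega_mul (pow_ne_zero _ hp.ne_zero) ht]
  have : Omega (p^k) = k := by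
    unfold Omega; rw [hp.primeFactorsList_pow]; simp
  omega

lemma semiprime_decomp {q : ℕ} (h : Omega q = 2) :
    q.minFac.Prime ∧ (q / q.minFac).Prime ∧ q = q.minFac * (q / q.minFac)
      ∧ q.minFac ≤ q / q.minFac := by
  have hq0 : q ≠ 0 := by rintro rfl; simp [Omega] at h
  have hq1 : q ≠ 1 := by rintro rfl; simp [Omega] at h
  have hp1 : q.minFac.Prime := Nat.minFac_prime hq1
  have heq : q = q.minFac * (q / q.minFac) := (Nat.mul_div_cancel' (Nat.minFac_dvd q)).symm
  have hd0 : q / q.minFac ≠ 0 := by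
    intro h0; rw [h0, mul_zero] at heq; exact hq0 heq
  have hOm : Omega (q / q.minFac) = 1 := by
    have := Omega_mul hp1.ne_zero hd0
    rw [← heq, h, Omega_prime hp1] at this
    omega
  have hp2 := prime_of_Omega_eq_one hOm
  refine ⟨hp1, hp2, heq, Nat.minFac_le_of_dvd hp2.two_le ?_⟩
  exact Dvd.intro_left _ heq.symm

lemma crt_finset_s19 (S : Finset ℕ) (md : ℕ → ℕ)
    (hcop : ∀ a ∈ S, ∀ b ∈ S, a ≠ b → Nat.Coprime (md a) (md b)) (t : ℕ → ℤ) :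
    ∃ r : ℤ, ∀ q ∈ S, (md q : ℤ) ∣ r - t q := by
  classical
  induction S using Finset.induction_on with
  | empty => exact ⟨0, by simp⟩
  | @insert a S haS ih =>
    obtain ⟨r, hr⟩ := ih (fun x hx y hy hxy => hcop x (Finset.mem_insert_of_mem hx)
      y (Finset.mem_insert_of_mem hy) hxy)
    have hco : Nat.Coprime (md a) (∏ q ∈ S, md q) :=
      Nat.Coprime.prod_right fun q hq => hcop a (Finset.mem_insert_self a S)
        q (Finset.mem_insert_of_mem hq) (by rintro rfl; exact haS hq)
    have hco' : IsCoprime ((md a : ℤ)) ((∏ q ∈ S, md q : ℕ) : ℤ) :=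
      Nat.isCoprime_iff_coprime.mpr hco
    obtain ⟨u, v, huv⟩ := hco'
    set P : ℤ := ((∏ q ∈ S, md q : ℕ) : ℤ) with hP
    refine ⟨t a * v * P + r * u * md a, ?_⟩
    intro q hq
    rcases Finset.mem_insert.mp hq with rfl | hqS
    · have heq : t q * v * P + r * u * md q - t q = (r - t q) * u * (md q : ℤ) := by
        linear_combination (t q) * huv
      rw [heq]
      exact dvd_mul_left ((md q : ℤ)) ((r - t q) * u)
    · have h1 : (md q : ℤ) ∣ P := by
        rw [hP]
        exact_mod_cast Int.natCast_dvd_natCast.mpr (Finset.dvd_prod_of_mem md hqS)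
      have h2 : t a * v * P + r * u * md a - t q
          = (t a * v - r * v) * P + (r - t q) := by
        linear_combination r * huv
      rw [h2]
      exact dvd_add (Dvd.dvd.mul_left h1 _) (hr q hqS)



/-- Assuming Dickson's conjecture: for `√N ≤ M < N` with `N − M < √N` and `⌊√N⌋` not
prime, every subset `A` of the semiprimes in `[M+1, N]` arises as the exact semiprime
pattern of some translated window: there is `n ∈ ℕ` with
`n + q ∈ P₂ ↔ q ∈ A` for all `q ∈ [M+1, N]`. -/
theorem semiprime_pattern_realization (hDickson : DicksonConjecture)
    (M N : ℕ)
    (h1 : Real.sqrt N ≤ (M : ℝ)) (h2 : M < N)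
    (h3 : (N : ℝ) - (M : ℝ) < Real.sqrt N)
    (h4 : ¬ (Nat.sqrt N).Prime)
    (A : Set ℕ) (hA : A ⊆ {q : ℕ | M + 1 ≤ q ∧ q ≤ N ∧ Omega q = 2}) :
    ∃ n : ℕ, 1 ≤ n ∧ ∀ q : ℕ, M + 1 ≤ q → q ≤ N → (Omega (n + q) = 2 ↔ q ∈ A) := by
  classical
  set s := Nat.sqrt N with hs
  set C : ℕ := Nat.factorial s * Nat.factorial s with hC
  set P : ℕ → ℕ := fun q => Nat.nth Nat.Prime (N + 1 + q) with hP
  have hPprime : ∀ q, (P q).Prime := fun q => Nat.prime_nth_prime _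
  have hPgt : ∀ q, N < P q := by
    intro q
    have h : N + 1 + q ≤ P q := (Nat.nth_strictMono Nat.infinite_setOf_prime).le_apply
    omega
  have hPinj : Function.Injective P := by
    intro x y hxy
    have h := Nat.nth_injective Nat.infinite_setOf_prime hxy
    omega
  set W := Finset.Icc (M+1) N with hW
  set AF := W.filter (fun q => q ∈ A) with hAF
  set B := W.filter (fun q => q ∉ A) with hB
  set Pi : ℕ := ∏ q ∈ B, (P q)^3 with hPi
  set D := C * Pi with hD
  have hCpos : 0 < C := Nat.mul_pos s.factorial_pos s.factorial_pos
  have hPipos : 0 < Pi := Finset.prod_pos fun q _ => pow_pos (hPprime q).pos 3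
  have hDpos : 0 < D := Nat.mul_pos hCpos hPipos
  have hsN : s ≤ N := Nat.sqrt_le_self N
  have hsu : Real.sqrt N < s + 1 := by
    rw [Real.sqrt_lt' (by positivity)]
    have hlt : N < (s+1) * (s+1) := Nat.lt_succ_sqrt N
    have h' : (N:ℝ) < ((s:ℝ)+1) * ((s:ℝ)+1) := by exact_mod_cast hlt
    nlinarith [h']
  have hNMs : N - M ≤ s := by
    have hx : (N:ℝ) - M < (s:ℝ) + 1 := lt_trans h3 hsu
    have hx2 : (N:ℝ) < (M:ℝ) + (s:ℝ) + 1 := by linarith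
    have hx3 : N < M + s + 1 := by exact_mod_cast hx2
    omega
  have h0B : (0:ℕ) ∉ B := by
    intro h0
    have := (Finset.mem_filter.mp h0).1
    simp [hW] at this
  -- the CRT solution
  have hcop : ∀ x ∈ insert 0 B, ∀ y ∈ insert 0 B, x ≠ y →
      Nat.Coprime (if x = 0 then C else (P x)^3) (if y = 0 then C else (P y)^3) := by
    have hCP : ∀ q, Nat.Coprime C ((P q)^3) := by
      intro q
      have hnd : ¬ (P q ∣ s.factorial) := by
        rw [(hPprime q).dvd_factorial]
        have := hPgt q
        omega
      have h1 : Nat.Coprime (s.factorial) (P q) :=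
        (Nat.Prime.coprime_iff_not_dvd (hPprime q)).mpr hnd |>.symm
      exact (Nat.Coprime.mul h1 h1).pow_right 3
    intro x hx y hy hxy
    rcases Finset.mem_insert.mp hx with rfl | hxB <;>
      rcases Finset.mem_insert.mp hy with rfl | hyB
    · exact absurd rfl hxy
    · have hy0 : y ≠ 0 := fun h => h0B (h ▸ hyB)
      simp only [if_pos rfl, if_neg hy0]
      exact hCP y
    · have hx0 : x ≠ 0 := fun h => h0B (h ▸ hxB)
      simp only [if_pos rfl, if_neg hx0]
      exact (hCP x).symm
    · have hx0 : x ≠ 0 := fun h => h0B (h ▸ hxB)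
      have hy0 : y ≠ 0 := fun h => h0B (h ▸ hyB)
      simp only [if_neg hx0, if_neg hy0]
      exact ((Nat.coprime_primes (hPprime x) (hPprime y)).mpr
        fun h => hxy (hPinj h)).pow 3 3
  obtain ⟨r0, hr0⟩ := crt_finset_s19 (insert 0 B) (fun q => if q = 0 then C else (P q)^3)
    hcop (fun q => if q = 0 then 0 else -(q:ℤ))
  set r : ℕ := (r0 % D).toNat with hr
  have hrcast : (r : ℤ) = r0 % D := Int.toNat_of_nonneg (Int.emod_nonneg r0 (by positivity))
  have hrD : ∀ d : ℕ, d ∣ D → (d:ℤ) ∣ r0 % D - r0 := by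
    intro d hd
    have : r0 % D - r0 = -(D * (r0 / D)) := by
      rw [Int.emod_def]; ring
    rw [this]
    exact (dvd_neg).mpr (Dvd.dvd.mul_right (Int.natCast_dvd_natCast.mpr hd) _)
  have hrC : C ∣ r := by
    have h0 := hr0 0 (Finset.mem_insert_self _ _)
    simp only [if_pos rfl] at h0
    have : (C:ℤ) ∣ (r:ℤ) := by
      rw [hrcast]
      have := dvd_add (hrD C ⟨Pi, rfl⟩) (by simpa using h0)
      simpa using this
    exact_mod_cast this
  have hrB : ∀ q ∈ B, (P q)^3 ∣ r + q := by
    intro q hq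
    have h0 := hr0 q (Finset.mem_insert_of_mem hq)
    have hq0 : q ≠ 0 := fun h => h0B (h ▸ hq)
    simp only [if_neg hq0] at h0
    have hdD : (P q)^3 ∣ D := Dvd.dvd.mul_left (Finset.dvd_prod_of_mem _ hq) C
    have : ((P q)^3 : ℤ) ∣ ((r:ℕ):ℤ) + (q:ℤ) := by
      rw [hrcast]
      have hx := dvd_add (hrD _ hdD)
        (show ((P q)^3:ℤ) ∣ r0 + q by simpa [sub_neg_eq_add] using h0)
      have heq : r0 % (D:ℤ) - r0 + (r0 + (q:ℤ)) = r0 % (D:ℤ) + q := by ring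
      rwa [heq] at hx
    exact_mod_cast this
  -- basic facts about elements of AF
  have hAFmem : ∀ q ∈ AF, M + 1 ≤ q ∧ q ≤ N ∧ Omega q = 2 := by
    intro q hq
    exact hA (Finset.mem_filter.mp hq).2
  have hmain : ∀ q ∈ AF, q.minFac.Prime ∧ (q / q.minFac).Prime ∧
      q = q.minFac * (q / q.minFac) ∧ q.minFac ≤ s ∧ s < q / q.minFac := by
    intro q hq
    obtain ⟨hqM, hqN, hq2⟩ := hAFmem q hq
    obtain ⟨hp1, hp2, heq, hle⟩ := semiprime_decomp hq2
    have hp1s : q.minFac ≤ s := by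
      rw [hs, Nat.le_sqrt]
      calc q.minFac * q.minFac ≤ q.minFac * (q / q.minFac) := Nat.mul_le_mul_left _ hle
        _ = q := heq.symm
        _ ≤ N := hqN
    refine ⟨hp1, hp2, heq, hp1s, ?_⟩
    by_contra hcon
    push_neg at hcon
    have hne : q / q.minFac ≠ s := fun h => h4 (h ▸ hp2)
    have hp2s : q / q.minFac + 1 ≤ s := by omega
    have hs2 : 2 ≤ s := by
      rw [hs, Nat.le_sqrt]
      have h4q : 4 ≤ q := by
        calc 4 = 2*2 := rfl
          _ ≤ q.minFac * (q / q.minFac) := Nat.mul_le_mul hp1.two_le hp2.two_le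
          _ = q := heq.symm
      omega
    have hsl : (s:ℝ) * s ≤ N := by exact_mod_cast Nat.sqrt_le N
    have hsu : Real.sqrt N < s + 1 := by
      rw [Real.sqrt_lt' (by positivity)]
      have hlt : N < (s+1) * (s+1) := Nat.lt_succ_sqrt N
      have : (N:ℝ) < ((s:ℝ)+1) * ((s:ℝ)+1) := by exact_mod_cast hlt
      nlinarith [this]
    have hMq : (M:ℝ) < q := by exact_mod_cast (by omega : M < q)
    have hqp2nat : q ≤ (q / q.minFac) * (q / q.minFac) := by
      calc q = q.minFac * (q / q.minFac) := heq
        _ ≤ (q / q.minFac) * (q / q.minFac) := Nat.mul_le_mul_right _ hle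
    have hqp2 : (q:ℝ) ≤ ((q / q.minFac : ℕ):ℝ) * ((q / q.minFac : ℕ):ℝ) := by
      exact_mod_cast hqp2nat
    have hp2r : ((q / q.minFac : ℕ):ℝ) + 1 ≤ (s:ℝ) := by exact_mod_cast hp2s
    have hs2r : (2:ℝ) ≤ (s:ℝ) := by exact_mod_cast hs2
    nlinarith [h3, hsl, hsu, hMq, hqp2, hp2r, hs2r]
  -- q.minFac divides everything relevant
  have hp1C : ∀ q ∈ AF, q.minFac ∣ C := by
    intro q hq
    obtain ⟨hp1, _, _, hp1s, _⟩ := hmain q hq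
    exact Dvd.dvd.mul_right (Nat.dvd_factorial hp1.pos hp1s) _
  have hp1D : ∀ q ∈ AF, q.minFac ∣ D := fun q hq => (hp1C q hq).mul_right Pi
  have hp1rq : ∀ q ∈ AF, q.minFac ∣ r + q := by
    intro q hq
    exact dvd_add ((hp1C q hq).trans hrC) (Nat.minFac_dvd q)
  set sq : ℕ → ℕ := fun q => (r + q) / q.minFac with hsqdef
  set bq : ℕ → ℕ := fun q => D / q.minFac with hbqdef
  have hDfac : ∀ q ∈ AF, D = q.minFac * bq q :=
    fun q hq => (Nat.mul_div_cancel' (hp1D q hq)).symm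
  have hrqfac : ∀ q ∈ AF, r + q = q.minFac * sq q :=
    fun q hq => (Nat.mul_div_cancel' (hp1rq q hq)).symm
  have hsmall : ∀ q ∈ AF, ∀ p : ℕ, p.Prime → p ≤ s → ¬ p ∣ sq q := by
    intro q hq p hp hps hdvd
    obtain ⟨hp1, hp2, heq, hp1s, hp2s⟩ := hmain q hq
    by_cases hpp1 : p = q.minFac
    · have h1 : p * p ∣ r + q := by
        rw [hrqfac q hq, ← hpp1]
        exact mul_dvd_mul_left p hdvd
      have h2 : p * p ∣ r :=
        (mul_dvd_mul (Nat.dvd_factorial hp.pos hps) (Nat.dvd_factorial hp.pos hps)).trans hrC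
      have h3 : p * p ∣ q := by
        have := Nat.dvd_sub h1 h2
        rwa [Nat.add_sub_cancel_left] at this
      have h5 : p ∣ q / q.minFac := by
        have h6 : q.minFac * q.minFac ∣ q.minFac * (q / q.minFac) := by
          rw [← heq, ← hpp1]; exact hpp1 ▸ h3
        have := (mul_dvd_mul_iff_left (a := q.minFac) (Nat.minFac_pos q).ne').mp h6
        rwa [hpp1]
      have := (Nat.prime_dvd_prime_iff_eq hp hp2).mp h5
      omega
    · have h1 : p ∣ r + q := by rw [hrqfac q hq]; exact hdvd.mul_left _
      have h2 : p ∣ r := ((Nat.dvd_factorial hp.pos hps).mul_right s.factorial).trans hrC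
      have h3 : p ∣ q := by
        have := Nat.dvd_sub h1 h2
        rwa [Nat.add_sub_cancel_left] at this
      rcases (Nat.Prime.dvd_mul hp).mp (heq ▸ h3) with h | h
      · exact hpp1 ((Nat.prime_dvd_prime_iff_eq hp hp1).mp h)
      · have := (Nat.prime_dvd_prime_iff_eq hp hp2).mp h
        omega
  have hbig : ∀ q ∈ AF, ∀ q' ∈ B, ¬ P q' ∣ sq q := by
    intro q hq q' hq' hdvd
    have h1 : P q' ∣ r + q := by rw [hrqfac q hq]; exact hdvd.mul_left _
    have h2 : P q' ∣ r + q' :=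
      (dvd_pow_self (P q') (three_ne_zero)).trans (hrB q' hq')
    have hne : q ≠ q' := by
      intro hqq
      have := (Finset.mem_filter.mp hq').2
      exact this (hqq ▸ (Finset.mem_filter.mp hq).2)
    have h3 : (P q' : ℤ) ∣ (q:ℤ) - q' := by
      have := dvd_sub (Int.natCast_dvd_natCast.mpr h1) (Int.natCast_dvd_natCast.mpr h2)
      push_cast at this
      have heq2 : ((r:ℤ) + q) - ((r:ℤ) + q') = (q:ℤ) - q' := by ring
      rwa [heq2] at this
    have habs : P q' ∣ ((q:ℤ) - q').natAbs := Int.natCast_dvd.mp h3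
    have hpos : 0 < ((q:ℤ) - q').natAbs := by omega
    have hle := Nat.le_of_dvd hpos habs
    have hqN := (hAFmem q hq).2.1
    have hq'mem := Finset.mem_Icc.mp (Finset.mem_filter.mp hq').1
    have hPg := hPgt q'
    omega
  -- set up Dickson
  set k := AF.card with hk
  set e : Fin k ≃ {x // x ∈ AF} := AF.equivFin.symm with he
  set av : Fin k → ℤ := fun i => ((sq ((e i) : ℕ) : ℕ) : ℤ) with hav
  set bv : Fin k → ℤ := fun i => ((bq ((e i) : ℕ) : ℕ) : ℤ) with hbv
  have hbqpos : ∀ q ∈ AF, 0 < bq q := by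
    intro q hq
    exact Nat.div_pos (Nat.le_of_dvd hDpos (hp1D q hq)) (Nat.minFac_pos q)
  have hbv1 : ∀ i, 1 ≤ bv i := by
    intro i
    have := hbqpos _ (e i).2
    simp only [hbv]
    exact_mod_cast this
  have hcond : ∀ p : ℕ, p.Prime → ∃ y : ℤ, ¬ ((p:ℤ) ∣ ∏ i, (av i + bv i * y)) := by
    intro p hp
    by_cases hpD : p ∣ D
    · refine ⟨0, fun hdvd => ?_⟩
      obtain ⟨i, -, hi⟩ := (Prime.dvd_finset_prod_iff (Nat.prime_iff_prime_int.mp hp) _).mp hdvd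
      rw [mul_zero, add_zero] at hi
      have hpsq : p ∣ sq ((e i):ℕ) := by
        simp only [hav] at hi
        exact_mod_cast hi
      rcases (Nat.Prime.dvd_mul hp).mp hpD with hc | hpi
      · have hps : p ≤ s := by
          rcases (Nat.Prime.dvd_mul hp).mp hc with h | h <;> exact (hp.dvd_factorial).mp h
        exact hsmall _ (e i).2 p hp hps hpsq
      · obtain ⟨q', hq', hd⟩ := (Prime.dvd_finset_prod_iff hp.prime _).mp hpi
        have hpeq : p = P q' :=
          (Nat.prime_dvd_prime_iff_eq hp (hPprime q')).mp (hp.dvd_of_dvd_pow hd)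
        exact hbig _ (e i).2 q' hq' (hpeq ▸ hpsq)
    · haveI := Fact.mk hp
      have hps : s < p := by
        by_contra hle
        push_neg at hle
        exact hpD (((Nat.dvd_factorial hp.pos hle).mul_right s.factorial).mul_right Pi)
      have hcard : AF.card < p := by
        have hc1 : AF.card ≤ W.card := Finset.card_filter_le _ _
        have hc2 : W.card = N - M := by rw [hW, Nat.card_Icc]; omega
        omega
      set bad : ℕ → ZMod p := fun q => (-(sq q : ZMod p)) * (bq q : ZMod p)⁻¹ with hbad
      have hex : ∃ z : ZMod p, z ∉ AF.image bad := by
        by_contra hc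
        push_neg at hc
        have hsub : (Finset.univ : Finset (ZMod p)) ⊆ AF.image bad := fun z _ => hc z
        have hcu := Finset.card_le_card hsub
        rw [Finset.card_univ, ZMod.card] at hcu
        have him := Finset.card_image_le (s := AF) (f := bad)
        omega
      obtain ⟨z, hz⟩ := hex
      refine ⟨(z.val : ℤ), fun hdvd => ?_⟩
      obtain ⟨i, -, hi⟩ := (Prime.dvd_finset_prod_iff (Nat.prime_iff_prime_int.mp hp) _).mp hdvd
      have hqAF : ((e i) : ℕ) ∈ AF := (e i).2
      have hbne : ((bq ((e i):ℕ) : ℕ) : ZMod p) ≠ 0 := by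
        intro hdb
        rw [ZMod.natCast_eq_zero_iff] at hdb
        exact hpD (hdb.trans ⟨((e i : ℕ)).minFac, by rw [hDfac _ hqAF]; ring⟩)
      have hzvz : ((z.val : ℕ) : ZMod p) = z := by
        simp [ZMod.natCast_val, ZMod.cast_id]
      have hzeq : ((sq ((e i):ℕ) : ℕ) : ZMod p)
          + ((bq ((e i):ℕ) : ℕ) : ZMod p) * z = 0 := by
        have hcast : (((av i + bv i * (z.val:ℤ)) : ℤ) : ZMod p) = 0 :=
          (ZMod.intCast_zmod_eq_zero_iff_dvd _ p).mpr hi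
        simp only [hav, hbv] at hcast
        push_cast at hcast
        rwa [hzvz] at hcast
      have hzbad : z = bad ((e i):ℕ) := by
        have hmul : ((bq ((e i):ℕ) : ℕ) : ZMod p) * z = -((sq ((e i):ℕ) : ℕ) : ZMod p) :=
          eq_neg_of_add_eq_zero_right hzeq
        rw [hbad]
        field_simp
        rw [mul_comm] at hmul
        linear_combination hmul
      exact hz (hzbad ▸ Finset.mem_image_of_mem bad hqAF)
  obtain ⟨m, hm1, hmp⟩ := hDickson k av bv hbv1 hcond 1
  have hn1 : 1 ≤ D * m + r := by
    have := Nat.mul_le_mul hDpos hm1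
    omega
  refine ⟨D * m + r, hn1, ?_⟩
  intro q hq1 hq2
  by_cases hqA : q ∈ A
  · have hqAF : q ∈ AF := Finset.mem_filter.mpr ⟨Finset.mem_Icc.mpr ⟨hq1, hq2⟩, hqA⟩
    have hi := hmp (e.symm ⟨q, hqAF⟩)
    have heiq : ((e (e.symm ⟨q, hqAF⟩)) : ℕ) = q := by rw [Equiv.apply_symm_apply]
    simp only [hav, hbv, heiq] at hi
    have hFint : ((sq q : ℕ) : ℤ) + ((bq q : ℕ) : ℤ) * m = ((sq q + bq q * m : ℕ) : ℤ) := by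
      push_cast; ring
    rw [hFint] at hi
    have hF : (sq q + bq q * m).Prime := by
      rwa [Int.prime_iff_natAbs_prime, Int.natAbs_natCast] at hi
    have hsplit : D * m + r + q = q.minFac * (sq q + bq q * m) := by
      have e1 := hDfac q hqAF
      have e2 := hrqfac q hqAF
      calc D * m + r + q = D * m + (r + q) := by omega
        _ = (q.minFac * bq q) * m + q.minFac * sq q := by rw [← e1, ← e2]
        _ = q.minFac * (sq q + bq q * m) := by ring
    rw [hsplit, Omega_mul (hmain q hqAF).1.ne_zero hF.ne_zero,
      Omega_prime (hmain q hqAF).1, Omega_prime hF]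
    exact iff_of_true rfl hqA
  · have hqB : q ∈ B := Finset.mem_filter.mpr ⟨Finset.mem_Icc.mpr ⟨hq1, hq2⟩, hqA⟩
    have hdvd : (P q)^3 ∣ D * m + r + q := by
      have hd1 : (P q)^3 ∣ D * m :=
        (Dvd.dvd.mul_left (Finset.dvd_prod_of_mem _ hqB) C).mul_right m
      have hd2 := hrB q hqB
      have : D * m + r + q = D * m + (r + q) := by omega
      rw [this]
      exact dvd_add hd1 hd2
    have h3om : 3 ≤ Omega (D * m + r + q) :=
      le_Omega_of_pow_dvd (hPprime q) hdvd (by omega)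
    constructor
    · intro h; omega
    · intro h; exact (hqA h).elim
end
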